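/- arXiv:2307.11601 — 5 statements merged into one kernel-verified Lean document; each statement's English description precedes it below -/
import Mathlib

section
/- (Theorem 2.1) Set p*_{m+1}(x) = ∏_{k=1}^{m+1}(x − x*_k) and q_{2m+1}(x) = p_m(x)·p*_{m+1}(x). Then: (i) G*_{m+1}(q) = ∫ q dμ for every polynomial q of degree ≤ 2m−1; (ii) for every k = 1,…,m+1, λ*_k = ((β_m+β_{m+1})/β_m) · ‖p_m‖²_μ / q'_{2m+1}(x*_k); (iii) if in addition the nodes interlace, i.e. x*_1 < x_1^{(G)} < x*_2 < ⋯ < x_m^{(G)} < x*_{m+1}, then q'_{2m+1}(x*_k) > 0 and consequently λ*_k > 0 for every k. -/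
open MeasureTheory Polynomial


lemma aux_orth (μ : Measure ℝ) (hint : ∀ q : Polynomial ℝ, Integrable (fun x => q.eval x) μ)
    (P : Polynomial ℝ) (m : ℕ) (horthm : ∀ j < m, ∫ x, x ^ j * P.eval x ∂μ = 0)
    (s : Polynomial ℝ) (hs : s.natDegree < m) : ∫ x, P.eval x * s.eval x ∂μ = 0 := by
  calc ∫ x, P.eval x * s.eval x ∂μ
      = ∫ x, ∑ j ∈ Finset.range m, s.coeff j * (x ^ j * P.eval x) ∂μ := by
        congr 1; funext x
        rw [eval_eq_sum_range' hs, Finset.mul_sum]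
        exact Finset.sum_congr rfl fun j _ => by ring
    _ = ∑ j ∈ Finset.range m, ∫ x, s.coeff j * (x ^ j * P.eval x) ∂μ := by
        apply integral_finset_sum
        intro j _
        have h := hint (C (s.coeff j) * (X ^ j * P))
        simp only [eval_mul, eval_pow, eval_C, eval_X] at h
        exact h
    _ = 0 := by
        apply Finset.sum_eq_zero
        intro j hj
        rw [integral_const_mul, horthm j (Finset.mem_range.mp hj), mul_zero]

lemma aux_prod_erase {n : ℕ} (f : Fin (n + 1) → ℝ) (k : Fin (n + 1)) :
    ∏ i ∈ Finset.univ.erase k, f i = ∏ j : Fin n, f (k.succAbove j) := by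
  refine (Finset.prod_bij (fun j _ => k.succAbove j) ?_ ?_ ?_ ?_).symm
  · exact fun j _ => Finset.mem_erase.mpr ⟨Fin.succAbove_ne k j, Finset.mem_univ _⟩
  · exact fun a _ b _ h => Fin.succAbove_right_injective h
  · intro b hb
    obtain ⟨z, hz⟩ := Fin.exists_succAbove_eq (Finset.mem_erase.mp hb).1
    exact ⟨z, Finset.mem_univ _, hz⟩
  · exact fun j _ => rfl

lemma aux_deriv (A : Polynomial ℝ) {n : ℕ} (xs : Fin (n + 1) → ℝ) (k : Fin (n + 1)) :
    (derivative (A * ∏ i, (X - C (xs i)))).eval (xs k)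
      = A.eval (xs k) * ∏ i ∈ Finset.univ.erase k, (xs k - xs i) := by
  have hB : (∏ i, (X - C (xs i)))
      = (X - C (xs k)) * ∏ i ∈ Finset.univ.erase k, (X - C (xs i)) :=
    (Finset.mul_prod_erase _ _ (Finset.mem_univ k)).symm
  rw [hB, derivative_mul, derivative_mul]
  simp [eval_prod]

lemma aux_sub_deg {A B : Polynomial ℝ} {m : ℕ} (hm : 1 ≤ m) (hA : A.Monic) (hB : B.Monic)
    (hAd : A.natDegree = m) (hBd : B.natDegree = m) : (A - B).natDegree < m := by
  rcases eq_or_ne A B with h | h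
  · simp only [h, sub_self, natDegree_zero]; omega
  · have hdA : A.degree = (m : ℕ) := by rw [degree_eq_natDegree hA.ne_zero, hAd]
    have hdB : B.degree = (m : ℕ) := by rw [degree_eq_natDegree hB.ne_zero, hBd]
    have hd : (A - B).degree < (m : ℕ) := by
      have := degree_sub_lt (hdA.trans hdB.symm) hA.ne_zero
        (by rw [hA.leadingCoeff, hB.leadingCoeff])
      rwa [hdA] at this
    exact (natDegree_lt_iff_degree_lt (sub_ne_zero.mpr h)).mpr hd

/-- Theorem 2.1: exactness degree, weight formula, and positivity of the weights of the
quadrature rule `G*_{m+1}` appearing in the weighted averaged rule. -/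
theorem stmt0
    (μ : Measure ℝ)
    (hint : ∀ q : Polynomial ℝ, Integrable (fun x => q.eval x) μ)
    (hsupp : {x : ℝ | ∀ ε > 0, 0 < μ (Set.Ioo (x - ε) (x + ε))}.Infinite)
    (p : ℕ → Polynomial ℝ)
    (hmonic : ∀ n, (p n).Monic)
    (hdeg : ∀ n, (p n).natDegree = n)
    (horth : ∀ n, ∀ j < n, ∫ x, x ^ j * (p n).eval x ∂μ = 0)
    (m : ℕ) (hm : 1 ≤ m)
    (βm βm1 : ℝ)
    (hβm : βm = (∫ x, ((p m).eval x) ^ 2 ∂μ) / (∫ x, ((p (m - 1)).eval x) ^ 2 ∂μ))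
    (hβm1 : βm1 = (∫ x, ((p (m + 1)).eval x) ^ 2 ∂μ) / (∫ x, ((p m).eval x) ^ 2 ∂μ))
    (hβmpos : 0 < βm) (hβm1pos : 0 < βm1)
    (xG wG : Fin m → ℝ)
    (hxG : StrictMono xG)
    (hzeros : ∀ j, (p m).eval (xG j) = 0)
    (hwG : ∀ j, 0 < wG j)
    (hGauss : ∀ q : Polynomial ℝ, q.natDegree ≤ 2 * m - 1 →
      ∑ j, wG j * q.eval (xG j) = ∫ x, q.eval x ∂μ)
    (xs ws : Fin (m + 1) → ℝ)
    (hxs : StrictMono xs)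
    (hnz : ∀ k, (p m).eval (xs k) ≠ 0)
    (havg : ∀ q : Polynomial ℝ, q.natDegree ≤ 2 * m + 2 →
      (βm1 / (βm + βm1)) * ∑ j, wG j * q.eval (xG j) +
        (βm / (βm + βm1)) * ∑ k, ws k * q.eval (xs k) = ∫ x, q.eval x ∂μ) :
    -- (i) exactness of `G*_{m+1}` for polynomials of degree ≤ 2m-1
    (∀ q : Polynomial ℝ, q.natDegree ≤ 2 * m - 1 →
      ∑ k, ws k * q.eval (xs k) = ∫ x, q.eval x ∂μ) ∧
    -- (ii) formula for the weights, with q_{2m+1} = p_m · ∏_k (X - x*_k)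
    (∀ k, ws k = ((βm + βm1) / βm) * (∫ x, ((p m).eval x) ^ 2 ∂μ) /
      (derivative (p m * ∏ i, (X - C (xs i)))).eval (xs k)) ∧
    -- (iii) under interlacing, q'_{2m+1}(x*_k) > 0 and λ*_k > 0
    ((∀ j : Fin m, xs j.castSucc < xG j ∧ xG j < xs j.succ) →
      ∀ k, 0 < (derivative (p m * ∏ i, (X - C (xs i)))).eval (xs k) ∧ 0 < ws k) := by
  classical
  have hc : (0:ℝ) < βm + βm1 := by linarith
  have hcne : βm + βm1 ≠ 0 := ne_of_gt hc
  have hβmne : βm ≠ 0 := ne_of_gt hβmpos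
  set N := ∫ x, ((p m).eval x) ^ 2 ∂μ with hN
  -- part (i)
  have part1 : ∀ q : Polynomial ℝ, q.natDegree ≤ 2 * m - 1 →
      ∑ k, ws k * q.eval (xs k) = ∫ x, q.eval x ∂μ := by
    intro q hq
    have h1 := hGauss q hq
    have h2 := havg q (by omega)
    rw [h1] at h2
    have h3 : βm * (∑ k, ws k * q.eval (xs k)) = βm * (∫ x, q.eval x ∂μ) := by
      field_simp at h2
      nlinarith [h2]
    exact mul_left_cancel₀ hβmne h3
  -- key identity
  have key : ∀ k : Fin (m+1),
      (βm / (βm + βm1)) *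
        (ws k * ((p m).eval (xs k) * ∏ i ∈ Finset.univ.erase k, (xs k - xs i))) = N := by
    intro k
    set r : Polynomial ℝ := ∏ i ∈ Finset.univ.erase k, (X - C (xs i)) with hr
    have hrmonic : r.Monic := monic_prod_of_monic _ _ (fun i _ => monic_X_sub_C _)
    have hrdeg : r.natDegree = m := by
      rw [hr, natDegree_prod_of_monic _ _ (fun i _ => monic_X_sub_C _)]
      simp [Finset.card_erase_of_mem]
    set q : Polynomial ℝ := p m * r with hq
    have hqdeg : q.natDegree = 2 * m := by
      rw [hq, (hmonic m).natDegree_mul hrmonic, hdeg, hrdeg]; ring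
    have h2 := havg q (by omega)
    have hG0 : ∑ j, wG j * q.eval (xG j) = 0 :=
      Finset.sum_eq_zero fun j _ => by simp [hq, hzeros j]
    have hS : ∑ i, ws i * q.eval (xs i)
        = ws k * ((p m).eval (xs k) * ∏ i ∈ Finset.univ.erase k, (xs k - xs i)) := by
      rw [Finset.sum_eq_single k]
      · simp [hq, hr, eval_prod]
      · intro i _ hik
        have hz : r.eval (xs i) = 0 := by
          rw [hr, eval_prod]
          exact Finset.prod_eq_zero (Finset.mem_erase.mpr ⟨hik, Finset.mem_univ i⟩) (by simp)
        simp [hq, hz]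
      · simp
    have hsub : (r - p m).natDegree < m :=
      aux_sub_deg hm hrmonic (hmonic m) hrdeg (hdeg m)
    have hI : ∫ x, q.eval x ∂μ = N := by
      calc ∫ x, q.eval x ∂μ
          = ∫ x, (((p m).eval x)^2 + (p m).eval x * (r - p m).eval x) ∂μ := by
            congr 1; funext x; simp [hq]; ring
        _ = (∫ x, ((p m).eval x)^2 ∂μ) + ∫ x, (p m).eval x * (r - p m).eval x ∂μ := by
            apply integral_add
            · have h := hint ((p m)^2)
              simp only [eval_pow] at h
              exact h
            · have h := hint (p m * (r - p m))
              simp only [eval_mul] at h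
              exact h
        _ = N := by
            rw [aux_orth μ hint (p m) m (horth m) _ hsub, add_zero]
    rw [hG0, hS, hI, mul_zero, zero_add] at h2
    exact h2
  -- weight ≠ 0 denominators
  have hEne : ∀ k : Fin (m+1),
      (p m).eval (xs k) * ∏ i ∈ Finset.univ.erase k, (xs k - xs i) ≠ 0 := by
    intro k
    apply mul_ne_zero (hnz k)
    rw [Finset.prod_ne_zero_iff]
    intro i hi
    have h : xs i ≠ xs k := fun h => (Finset.mem_erase.mp hi).1 (hxs.injective h)
    exact sub_ne_zero.mpr h.symm
  -- part (ii)
  have part2 : ∀ k, ws k = ((βm + βm1) / βm) * N /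
      (derivative (p m * ∏ i, (X - C (xs i)))).eval (xs k) := by
    intro k
    rw [aux_deriv, eq_div_iff (hEne k), ← key k]
    field_simp
  refine ⟨part1, part2, ?_⟩
  -- part (iii)
  intro hIl k
  have hpm : p m = ∏ j, (X - C (xG j)) := by
    by_contra h
    have hPmonic : (∏ j, (X - C (xG j))).Monic :=
      monic_prod_of_monic _ _ fun j _ => monic_X_sub_C _
    have hPdeg : (∏ j, (X - C (xG j))).natDegree = m := by
      rw [natDegree_prod_of_monic _ _ fun j _ => monic_X_sub_C _]; simp
    have hne : p m - ∏ j, (X - C (xG j)) ≠ 0 := sub_ne_zero.mpr h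
    have hdn : (p m - ∏ j, (X - C (xG j))).natDegree < m :=
      aux_sub_deg hm (hmonic m) hPmonic (hdeg m) hPdeg
    have := eq_zero_of_natDegree_lt_card_of_eval_eq_zero
      (p m - ∏ j, (X - C (xG j))) hxG.injective
      (fun j => by
        have hz2 : eval (xG j) (∏ i : Fin m, (X - C (xG i))) = 0 := by
          rw [eval_prod]
          exact Finset.prod_eq_zero (Finset.mem_univ j) (by simp)
        simp [hzeros j, hz2])
      (by simpa using hdn)
    exact hne this
  have hpmEval : (p m).eval (xs k) = ∏ j, (xs k - xG j) := by
    rw [hpm, eval_prod]; simp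
  have hErase : ∏ i ∈ Finset.univ.erase k, (xs k - xs i)
      = ∏ j : Fin m, (xs k - xs (k.succAbove j)) :=
    aux_prod_erase (fun i => xs k - xs i) k
  have hpos : 0 < (p m).eval (xs k) * ∏ i ∈ Finset.univ.erase k, (xs k - xs i) := by
    rw [hpmEval, hErase, ← Finset.prod_mul_distrib]
    apply Finset.prod_pos
    intro j _
    rcases lt_or_ge (j : ℕ) (k : ℕ) with hjk | hjk
    · have h1 : xG j < xs k :=
        lt_of_lt_of_le (hIl j).2 (hxs.monotone
          (by rw [Fin.le_def]; simp only [Fin.val_succ]; omega))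
      have h2 : xs (k.succAbove j) < xs k := by
        rw [Fin.succAbove_of_castSucc_lt _ _
          (by rw [Fin.lt_def]; simp only [Fin.coe_castSucc]; omega)]
        exact hxs (by rw [Fin.lt_def]; simp only [Fin.coe_castSucc]; omega)
      exact mul_pos (by linarith) (by linarith)
    · have h1 : xs k < xG j :=
        lt_of_le_of_lt (hxs.monotone
          (by rw [Fin.le_def]; simp only [Fin.coe_castSucc]; omega)) (hIl j).1
      have h2 : xs k < xs (k.succAbove j) := by
        rw [Fin.succAbove_of_le_castSucc _ _
          (by rw [Fin.le_def]; simp only [Fin.coe_castSucc]; omega)]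
        exact hxs (by rw [Fin.lt_def]; simp only [Fin.val_succ]; omega)
      exact mul_pos_of_neg_of_neg (by linarith) (by linarith)
  have hNpos : 0 < N := by
    have h0 : 0 ≤ N := integral_nonneg fun x => sq_nonneg _
    rcases h0.lt_or_eq with h | h
    · exact h
    · exfalso
      rw [hβm1, ← h, div_zero] at hβm1pos
      exact lt_irrefl 0 hβm1pos
  have hDpos : 0 < (derivative (p m * ∏ i, (X - C (xs i)))).eval (xs k) := by
    rw [aux_deriv]; exact hpos
  refine ⟨hDpos, ?_⟩
  rw [part2 k]
  exact div_pos (mul_pos (div_pos hc hβmpos) hNpos) hDpos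
end

section
/- (Inequality (2.14), bound on the weights of G*_{m+1}) The weights satisfy λ*_1 ≤ μ((−∞, x*_2]), λ*_k ≤ μ((x*_{k−1}, x*_{k+1}]) for every 2 ≤ k ≤ m, and λ*_{m+1} ≤ μ((x*_m, ∞)). -/
/-!
Write `q₂ₘ` for the coefficient of `X ^ (2m)`. As `p_m` vanishes at the Gauss nodes,
`∫ q - G_m(q) = q₂ₘ ∫ p_m²` for `deg q ≤ 2m`, so `G*_{m+1}(q) = ∫ q + κ q₂ₘ` with
`κ = (β_{m+1}/β_m) ∫ p_m² ≥ 0`; in particular `G*_{m+1}(q) ≤ ∫ q` whenever `q₂ₘ ≤ 0`.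

The weight bounds then follow by a Chebyshev–Markov–Stieltjes argument. Fix a node `t`. With
`u = ∏ (X - x*_j)²` over the nodes left of `t`, let `g` interpolate the completely monotone
function `1/u` at `t` and at the pairs `x*_j, x*_j + δ` right of `t`, and put `q = 1 - u g`.
Then `q` has degree `≤ 2m` and `q₂ₘ ≤ 0`, equals `1` at the nodes left of `t` and `0` at the
others, is `≤ 1` left of `t` (Newton's form shows `g ≥ 0` there), and `≤ 0` right of `t` except
on the gaps `(x*_j, x*_j + δ)`, where the interpolation remainder is `O(δ)`. Letting `δ → 0` gives
`∑_{x*_j < t} λ*_j ≤ μ(-∞, t)`; reflection gives the bound by `μ(t, ∞)`, and as the total weight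
is `μ(ℝ)` the two combine to the bounds on `(x*_{k-1}, x*_{k+1})`.
-/

open MeasureTheory Polynomial

open Set Finset Filter Topology
open scoped Nat

/-! ### Derivative chains and interpolation remainders -/

theorem Polynomial.eval_iterate_derivative_of_natDegree_le {R : Type*} [Semiring R] {p : R[X]}
    {L : ℕ} (hp : p.natDegree ≤ L) (x : R) : (derivative^[L] p).eval x = L ! * p.coeff L := by
  have h0 : (derivative^[L] p).natDegree = 0 := by
    have := natDegree_iterate_derivative p L
    omega
  rw [eq_C_of_natDegree_eq_zero h0, eval_C, coeff_iterate_derivative, zero_add,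
    Nat.descFactorial_self, nsmul_eq_mul]

def HasDerivChainOn (F : ℕ → ℝ → ℝ) (s : Set ℝ) : Prop :=
  ∀ k, ∀ x ∈ s, HasDerivAt (F k) (F (k + 1) x) x

namespace HasDerivChainOn

variable {F : ℕ → ℝ → ℝ} {s : Set ℝ}

theorem mono (hF : HasDerivChainOn F s) {t : Set ℝ} (hts : t ⊆ s) : HasDerivChainOn F t :=
  fun k x hx => hF k x (hts hx)

theorem exists_finset_deriv_eq_zero [s.OrdConnected] (hF : HasDerivChainOn F s) {K : ℕ}
    {S : Finset ℝ} (hS : ↑S ⊆ s) (hcard : #S = K + 2) (hzero : ∀ x ∈ S, F 0 x = 0) :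
    ∃ T : Finset ℝ, ↑T ⊆ s ∧ #T = K + 1 ∧ ∀ x ∈ T, F 1 x = 0 := by
  set y := S.orderEmbOfFin hcard
  have hyS (j) : y j ∈ S := S.orderEmbOfFin_mem hcard j
  have hroot (j : Fin (K + 1)) : ∃ c ∈ Ioo (y j.castSucc) (y j.succ), F 1 c = 0 := by
    have hsub : Icc (y j.castSucc) (y j.succ) ⊆ s := s.Icc_subset (hS (hyS _)) (hS (hyS _))
    exact exists_hasDerivAt_eq_zero (y.strictMono j.castSucc_lt_succ)
      (fun x hx => (hF 0 x (hsub hx)).continuousAt.continuousWithinAt)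
      (by rw [hzero _ (hyS _), hzero _ (hyS _)]) fun x hx => hF 0 x (hsub (Ioo_subset_Icc_self hx))
  choose c hc hc0 using hroot
  have hcmono : StrictMono c := Fin.strictMono_iff_lt_succ.2 fun j =>
    (hc j.castSucc).2.trans (by simpa using (hc j.succ).1)
  refine ⟨univ.image c, fun x hx => ?_, ?_, by simpa using hc0⟩
  · obtain ⟨j, -, rfl⟩ := Finset.mem_image.1 hx
    exact s.Icc_subset (hS (hyS _)) (hS (hyS _)) (Ioo_subset_Icc_self (hc j))
  · rw [Finset.card_image_of_injective _ hcmono.injective, card_univ, Fintype.card_fin]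

theorem exists_eq_zero [s.OrdConnected] (hF : HasDerivChainOn F s) {K : ℕ} {S : Finset ℝ}
    (hS : ↑S ⊆ s) (hcard : #S = K + 1) (hzero : ∀ x ∈ S, F 0 x = 0) : ∃ ξ ∈ s, F K ξ = 0 := by
  induction K generalizing F S with
  | zero =>
    obtain ⟨x, hx⟩ := card_pos.1 (by rw [hcard]; exact Nat.one_pos)
    exact ⟨x, hS hx, hzero x hx⟩
  | succ K ih =>
    obtain ⟨T, hT, hTcard, hTzero⟩ := hF.exists_finset_deriv_eq_zero hS hcard hzero
    exact ih (fun k => hF (k + 1)) hT hTcard hTzero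

theorem sub_polynomial (hF : HasDerivChainOn F s) (p : ℝ[X]) :
    HasDerivChainOn (fun k x => F k x - (derivative^[k] p).eval x) s := fun k x hx => by
  simpa [Function.iterate_succ_apply'] using
    (hF k x hx).fun_sub (Polynomial.hasDerivAt (derivative^[k] p) x)

variable [s.OrdConnected] {S : Finset ℝ} {L : ℕ} {p : ℝ[X]}

theorem exists_eq_factorial_mul_coeff (hF : HasDerivChainOn F s) (hS : ↑S ⊆ s)
    (hcard : #S = L + 1) (hp : p.natDegree ≤ L) (hpS : ∀ y ∈ S, p.eval y = F 0 y) :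
    ∃ ξ ∈ s, F L ξ = L ! * p.coeff L := by
  obtain ⟨ξ, hξ, h⟩ :=
    (hF.sub_polynomial p).exists_eq_zero hS hcard fun y hy => by simp [hpS y hy]
  refine ⟨ξ, hξ, ?_⟩
  rw [← eval_iterate_derivative_of_natDegree_le hp ξ]
  exact sub_eq_zero.1 h

theorem exists_sub_eval_eq_mul_prod (hF : HasDerivChainOn F s) (hS : ↑S ⊆ s)
    (hcard : #S = L + 1) (hp : p.natDegree ≤ L) (hpS : ∀ y ∈ S, p.eval y = F 0 y) {x : ℝ}
    (hx : x ∈ s) : ∃ ξ ∈ s, F 0 x - p.eval x = F (L + 1) ξ / (L + 1)! * ∏ y ∈ S, (x - y) := by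
  by_cases hxS : x ∈ S
  · exact ⟨x, hx, by rw [hpS x hxS, sub_self, prod_eq_zero hxS (sub_self x), mul_zero]⟩
  have hω : ∏ y ∈ S, (x - y) ≠ 0 :=
    prod_ne_zero_iff.2 fun y hy => sub_ne_zero.2 (ne_of_mem_of_not_mem hy hxS).symm
  -- add the multiple of the nodal polynomial that also interpolates at `x`
  set K := (F 0 x - p.eval x) / ∏ y ∈ S, (x - y)
  set p' := p + C K * Lagrange.nodal S id
  have hnodal : (Lagrange.nodal S id).natDegree = L + 1 := by rw [Lagrange.natDegree_nodal, hcard]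
  have hp'deg : p'.natDegree ≤ L + 1 :=
    natDegree_add_le_of_degree_le (hp.trans L.le_succ) (natDegree_C_mul_le _ _ |>.trans hnodal.le)
  have hp'coeff : p'.coeff (L + 1) = K := by
    rw [coeff_add, coeff_eq_zero_of_natDegree_lt (by omega), coeff_C_mul, ← hnodal,
      Lagrange.nodal_monic.coeff_natDegree, zero_add, mul_one]
  have hp'S : ∀ y ∈ insert x S, p'.eval y = F 0 y := by
    intro y hy
    rcases Finset.mem_insert.1 hy with rfl | hy
    · simp only [p', eval_add, eval_mul, eval_C, Lagrange.eval_nodal, id, K, div_mul_cancel₀ _ hω]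
      ring
    · simp [p', Lagrange.eval_nodal, prod_eq_zero hy, hpS y hy]
  obtain ⟨ξ, hξ, hξeq⟩ := hF.exists_eq_factorial_mul_coeff (coe_insert x S ▸ insert_subset hx hS)
    (by rw [card_insert_of_notMem hxS, hcard]) hp'deg hp'S
  refine ⟨ξ, hξ, ?_⟩
  rw [hξeq, hp'coeff, mul_div_cancel_left₀ _ (by positivity), div_mul_cancel₀ _ hω]

end HasDerivChainOn

/-! ### Completely monotone chains -/

structure IsCompletelyMonotoneOn (F : ℕ → ℝ → ℝ) (s : Set ℝ) : Prop where
  hasDerivChainOn : HasDerivChainOn F s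
  nonneg : ∀ k, ∀ x ∈ s, 0 ≤ (-1) ^ k * F k x

def leibnizMul (F G : ℕ → ℝ → ℝ) : ℕ → ℝ → ℝ :=
  fun k x => ∑ ij ∈ antidiagonal k, (k.choose ij.1 : ℝ) * (F ij.1 x * G ij.2 x)

@[simp]
theorem leibnizMul_zero (F G : ℕ → ℝ → ℝ) (x : ℝ) : leibnizMul F G 0 x = F 0 x * G 0 x := by
  simp [leibnizMul]

noncomputable def invSubChain (c : ℝ) : ℕ → ℝ → ℝ :=
  fun k x => (-1) ^ k * k ! * ((x - c) ^ (k + 1))⁻¹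

namespace IsCompletelyMonotoneOn

variable {F G : ℕ → ℝ → ℝ} {s : Set ℝ}

theorem mono (hF : IsCompletelyMonotoneOn F s) {t : Set ℝ} (hts : t ⊆ s) :
    IsCompletelyMonotoneOn F t :=
  ⟨hF.hasDerivChainOn.mono hts, fun k x hx => hF.nonneg k x (hts hx)⟩

theorem one : IsCompletelyMonotoneOn (fun k _ => if k = 0 then 1 else 0) s where
  hasDerivChainOn k x _ := by simpa using hasDerivAt_const x _
  nonneg k x _ := by rcases k with _ | k <;> simp

theorem invSubChain (c : ℝ) : IsCompletelyMonotoneOn (invSubChain c) (Ioi c) where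
  hasDerivChainOn k x (hx : c < x) := by
    have hxc : x - c ≠ 0 := sub_ne_zero.2 hx.ne'
    refine (((hasDerivAt_id' x).sub_const c).fun_pow (k + 1) |>.fun_inv (pow_ne_zero _ hxc)
      |>.const_mul ((-1) ^ k * k ! : ℝ)).congr_deriv ?_
    simp only [_root_.invSubChain, Nat.factorial_succ]
    field_simp
    push_cast
    ring
  nonneg k x (hx : c < x) := by
    have : (-1 : ℝ) ^ k * (-1) ^ k = 1 := by rw [← mul_pow]; simp
    simp only [_root_.invSubChain, ← mul_assoc, this, one_mul]
    have := sub_pos.2 hx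
    positivity

theorem leibnizMul (hF : IsCompletelyMonotoneOn F s) (hG : IsCompletelyMonotoneOn G s) :
    IsCompletelyMonotoneOn (leibnizMul F G) s where
  hasDerivChainOn k x hx := by
    refine (HasDerivAt.fun_sum fun ij (_ : ij ∈ antidiagonal k) =>
      ((hF.hasDerivChainOn ij.1 x hx).mul (hG.hasDerivChainOn ij.2 x hx)).const_mul
        (k.choose ij.1 : ℝ)).congr_deriv ?_
    rw [_root_.leibnizMul, sum_antidiagonal_choose_succ_mul (fun i j => F i x * G j x),
      ← sum_add_distrib]
    refine sum_congr rfl fun ij hij => ?_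
    rw [Nat.choose_symm_of_eq_add (mem_antidiagonal.1 hij).symm]
    ring
  nonneg k x hx := by
    rw [_root_.leibnizMul, mul_sum]
    refine sum_nonneg fun ⟨i, j⟩ hij => ?_
    rw [← mem_antidiagonal.1 hij, pow_add]
    have := mul_nonneg (hF.nonneg i x hx) (hG.nonneg j x hx)
    calc (0 : ℝ) ≤ ((i + j).choose i : ℝ) * (((-1) ^ i * F i x) * ((-1) ^ j * G j x)) := by
          positivity
      _ = _ := by ring

end IsCompletelyMonotoneOn

theorem exists_isCompletelyMonotoneOn_mul_prod_eq_one {b : ℝ} (P : Finset ℝ)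
    (hP : ∀ c ∈ P, c < b) : ∃ F, IsCompletelyMonotoneOn F (Ici b) ∧
      ∀ x ∈ Ici b, F 0 x * ∏ c ∈ P, (x - c) ^ 2 = 1 := by
  induction P using Finset.induction_on with
  | empty => exact ⟨_, .one, fun x _ => by simp⟩
  | insert c P hcP ih =>
    obtain ⟨F, hF, hFP⟩ := ih fun c' hc' => hP c' (mem_insert_of_mem hc')
    have hc : IsCompletelyMonotoneOn (invSubChain c) (Ici b) :=
      (IsCompletelyMonotoneOn.invSubChain c).mono (Ici_subset_Ioi.2 (hP c (mem_insert_self c P)))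
    refine ⟨leibnizMul F (leibnizMul (invSubChain c) (invSubChain c)), hF.leibnizMul
      (hc.leibnizMul hc), fun x hx => ?_⟩
    have hxc : x - c ≠ 0 := sub_ne_zero.2 (hP c (mem_insert_self c P) |>.trans_le hx).ne'
    rw [prod_insert hcP, ← hFP x hx]
    simp only [leibnizMul_zero, invSubChain, pow_zero, Nat.factorial_zero, Nat.cast_one, zero_add,
      pow_one]
    field_simp

namespace Lagrange

variable {S : Finset ℝ} {f : ℝ → ℝ}

theorem natDegree_interpolate_id_le {L : ℕ} (hcard : #S = L + 1) :
    (interpolate S id f).natDegree ≤ L := by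
  rcases eq_or_ne (interpolate S id f) 0 with h | h
  · simp [h]
  · have := degree_interpolate_lt (r := f) (Set.injOn_id (S : Set ℝ))
    rw [hcard, ← natDegree_lt_iff_degree_lt h] at this
    omega

theorem eval_interpolate_id {y : ℝ} (hy : y ∈ S) : (interpolate S id f).eval y = f y :=
  eval_interpolate_at_node f (Set.injOn_id _) hy

end Lagrange

theorem Polynomial.eq_add_C_mul_nodal {T : Finset ℝ} {p q : ℝ[X]} (hp : p.natDegree ≤ #T)
    (hq : q.degree < #T) (hpq : ∀ x ∈ T, p.eval x = q.eval x) :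
    p = q + C (p.coeff #T) * Lagrange.nodal T id := by
  refine eq_of_degree_sub_lt_of_eval_finset_eq T ?_ fun x hx => ?_
  · refine (degree_lt_iff_coeff_zero _ _).2 fun m hm => ?_
    have hnodal := Lagrange.natDegree_nodal (s := T) (v := id)
    rcases hm.lt_or_eq with hm | rfl
    · simp [coeff_eq_zero_of_natDegree_lt (hp.trans_lt hm),
        coeff_eq_zero_of_degree_lt (hq.trans (by exact_mod_cast hm)),
        coeff_eq_zero_of_natDegree_lt (hnodal ▸ hm)]
    · rw [coeff_sub, coeff_add, coeff_C_mul, coeff_eq_zero_of_degree_lt hq, ← hnodal,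
        Lagrange.nodal_monic.coeff_natDegree]
      ring
  · simp [hpq x hx, Lagrange.eval_nodal, prod_eq_zero hx]

namespace IsCompletelyMonotoneOn

variable {F : ℕ → ℝ → ℝ} {s : Set ℝ} [s.OrdConnected] {S : Finset ℝ}

theorem coeff_interpolate_nonneg (hF : IsCompletelyMonotoneOn F s) (hS : ↑S ⊆ s) {L : ℕ}
    (hcard : #S = L + 1) : 0 ≤ (-1) ^ L * (Lagrange.interpolate S id (F 0)).coeff L := by
  obtain ⟨ξ, hξ, hξeq⟩ := hF.hasDerivChainOn.exists_eq_factorial_mul_coeff hS hcard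
    (Lagrange.natDegree_interpolate_id_le hcard) fun y hy => Lagrange.eval_interpolate_id hy
  have := hF.nonneg L ξ hξ
  rw [hξeq, mul_left_comm] at this
  exact nonneg_of_mul_nonneg_right this (by positivity)

/-- Newton's form of the interpolant: each new node adds a term whose coefficient and nodal
factor have the same sign `(-1) ^ k` to the left of all nodes. -/
theorem eval_interpolate_nonneg (hF : IsCompletelyMonotoneOn F s) (hS : ↑S ⊆ s) {x : ℝ}
    (hx : ∀ y ∈ S, x ≤ y) : 0 ≤ (Lagrange.interpolate S id (F 0)).eval x := by
  induction S using Finset.induction_on with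
  | empty => simp
  | insert y T hyT ih =>
    rw [coe_insert, Set.insert_subset_iff] at hS
    have hcard := card_insert_of_notMem hyT
    set g := Lagrange.interpolate (insert y T) id (F 0)
    have hnewton := eq_add_C_mul_nodal (p := g) (q := Lagrange.interpolate T id (F 0))
      (Lagrange.natDegree_interpolate_id_le hcard)
      (Lagrange.degree_interpolate_lt _ (Set.injOn_id _)) fun z hz => by
        rw [Lagrange.eval_interpolate_id (mem_insert_of_mem hz), Lagrange.eval_interpolate_id hz]
    have hprod : ∏ z ∈ T, (x - z) = (-1) ^ #T * ∏ z ∈ T, (z - x) := by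
      rw [← prod_neg]
      simp
    have hcoeff := hF.coeff_interpolate_nonneg (coe_insert y T ▸ Set.insert_subset hS.1 hS.2)
      hcard
    have hpos : 0 ≤ ∏ z ∈ T, (z - x) :=
      prod_nonneg fun z hz => sub_nonneg.2 (hx z (mem_insert_of_mem hz))
    rw [hnewton, eval_add, eval_mul, eval_C, Lagrange.eval_nodal]
    simp only [id, hprod]
    have := ih hS.2 fun z hz => hx z (mem_insert_of_mem hz)
    nlinarith [mul_nonneg hcoeff hpos]

theorem eval_le_eval_interpolate (hF : IsCompletelyMonotoneOn F s) (hS : ↑S ⊆ s) {N : ℕ}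
    (hcard : #S = 2 * N + 1) {x : ℝ} (hx : x ∈ s) (hω : 0 ≤ ∏ y ∈ S, (x - y)) :
    F 0 x ≤ (Lagrange.interpolate S id (F 0)).eval x := by
  obtain ⟨ξ, hξ, hrem⟩ := hF.hasDerivChainOn.exists_sub_eval_eq_mul_prod hS hcard
    (Lagrange.natDegree_interpolate_id_le hcard) (fun y hy => Lagrange.eval_interpolate_id hy) hx
  have hsign : F (2 * N + 1) ξ ≤ 0 := by
    simpa [pow_succ, pow_mul] using hF.nonneg (2 * N + 1) ξ hξ
  have : F (2 * N + 1) ξ / (2 * N + 1)! * ∏ y ∈ S, (x - y) ≤ 0 :=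
    mul_nonpos_of_nonpos_of_nonneg (div_nonpos_of_nonpos_of_nonneg hsign (by positivity)) hω
  linarith

end IsCompletelyMonotoneOn

theorem HasDerivChainOn.abs_sub_eval_interpolate_le {F : ℕ → ℝ → ℝ} {s : Set ℝ} [s.OrdConnected]
    (hF : HasDerivChainOn F s) {S : Finset ℝ} (hS : ↑S ⊆ s) {L : ℕ} (hcard : #S = L + 1)
    {M : ℝ} (hM : ∀ y ∈ s, |F (L + 1) y| ≤ M) {x : ℝ} (hx : x ∈ s) :
    |F 0 x - (Lagrange.interpolate S id (F 0)).eval x| ≤ M / (L + 1)! * |∏ y ∈ S, (x - y)| := by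
  obtain ⟨ξ, hξ, hrem⟩ := hF.exists_sub_eval_eq_mul_prod hS hcard
    (Lagrange.natDegree_interpolate_id_le hcard) (fun y hy => Lagrange.eval_interpolate_id hy) hx
  rw [hrem, abs_mul, abs_div, abs_of_pos (by positivity : (0 : ℝ) < (L + 1)!)]
  gcongr
  exact hM ξ hξ

theorem abs_prod_sub_le_mul_pow {S : Finset ℝ} {x z ℓ : ℝ} (hz : z ∈ S)
    (hℓ : ∀ y ∈ S, |x - y| ≤ ℓ) : |∏ y ∈ S, (x - y)| ≤ |x - z| * ℓ ^ (#S - 1) := by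
  rw [← mul_prod_erase S _ hz, abs_mul, abs_prod, ← card_erase_of_mem hz, ← prod_const]
  gcongr with y hy
  exact hℓ y (mem_of_mem_erase hy)

/-! ### Comparison polynomials -/

noncomputable def pairedNodes (b δ : ℝ) (R : Finset ℝ) : Finset ℝ :=
  insert b (R ∪ R.image (· + δ))

section pairedNodes

variable {b δ x : ℝ} {R : Finset ℝ}

theorem eventually_forall_add_ne (R : Finset ℝ) :
    ∀ᶠ δ in 𝓝[>] (0 : ℝ), ∀ z ∈ R, ∀ z' ∈ R, z + δ ≠ z' := by
  simp only [eventually_all_finset]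
  intro z _ z' _
  rcases eq_or_ne z z' with rfl | h
  · filter_upwards [self_mem_nhdsWithin] with δ (hδ : 0 < δ)
    linarith
  · filter_upwards [nhdsWithin_le_nhds (eventually_ne_nhds (sub_ne_zero.2 h.symm).symm)] with δ hδ
    contrapose! hδ
    linarith

theorem pairedNodes_subset_Ici (hR : ∀ z ∈ R, b < z) (hδ : 0 < δ) :
    ↑(pairedNodes b δ R) ⊆ Ici b := by
  intro y hy
  simp only [pairedNodes, coe_insert, coe_union, coe_image, Set.mem_insert_iff, Set.mem_union,
    mem_coe, Set.mem_image] at hy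
  rcases hy with rfl | hy | ⟨z, hz, rfl⟩
  · exact Set.mem_Ici.2 le_rfl
  · exact (hR y hy).le
  · exact mem_Ici.2 ((hR z hz).le.trans (by linarith))

theorem disjoint_pairedNodes (hR : ∀ z ∈ R, b < z) (hδ : 0 < δ)
    (hdisj : ∀ z ∈ R, ∀ z' ∈ R, z + δ ≠ z') :
    b ∉ R ∪ R.image (· + δ) ∧ Disjoint R (R.image (· + δ)) := by
  refine ⟨fun hb => ?_, disjoint_left.2 fun z hz hz' => ?_⟩
  · rcases Finset.mem_union.1 hb with hb | hb
    · exact lt_irrefl b (hR b hb)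
    · obtain ⟨z, hz, hzb⟩ := Finset.mem_image.1 hb
      linarith [hR z hz]
  · obtain ⟨z', hz', hzz'⟩ := Finset.mem_image.1 hz'
    exact hdisj z' hz' z hz hzz'

theorem card_pairedNodes (hR : ∀ z ∈ R, b < z) (hδ : 0 < δ)
    (hdisj : ∀ z ∈ R, ∀ z' ∈ R, z + δ ≠ z') : #(pairedNodes b δ R) = 2 * #R + 1 := by
  obtain ⟨hb, hRR⟩ := disjoint_pairedNodes hR hδ hdisj
  rw [pairedNodes, card_insert_of_notMem hb, card_union_of_disjoint hRR,
    card_image_of_injective _ (add_left_injective δ)]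
  ring

theorem prod_pairedNodes (hR : ∀ z ∈ R, b < z) (hδ : 0 < δ)
    (hdisj : ∀ z ∈ R, ∀ z' ∈ R, z + δ ≠ z') (x : ℝ) :
    ∏ y ∈ pairedNodes b δ R, (x - y) = (x - b) * ∏ z ∈ R, ((x - z) * (x - (z + δ))) := by
  obtain ⟨hb, hRR⟩ := disjoint_pairedNodes hR hδ hdisj
  rw [pairedNodes, prod_insert hb, prod_union hRR,
    prod_image fun z _ z' _ h => add_right_cancel h, prod_mul_distrib]

/-- Each pair contributes a factor `(x - z) (x - (z + δ)) ≥ 0`. -/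
theorem prod_pairedNodes_nonneg (hR : ∀ z ∈ R, b < z) (hδ : 0 < δ)
    (hdisj : ∀ z ∈ R, ∀ z' ∈ R, z + δ ≠ z') (hx : b ≤ x) (hgap : ∀ z ∈ R, x ∉ Ioo z (z + δ)) :
    0 ≤ ∏ y ∈ pairedNodes b δ R, (x - y) := by
  rw [prod_pairedNodes hR hδ hdisj]
  refine mul_nonneg (sub_nonneg.2 hx) (prod_nonneg fun z hz => ?_)
  have := hgap z hz
  rw [Set.mem_Ioo, not_and_or, not_lt, not_lt] at this
  rcases this with h | h <;> nlinarith

end pairedNodes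

noncomputable def comparisonPoly (P S : Finset ℝ) (f : ℝ → ℝ) : ℝ[X] :=
  1 - (∏ c ∈ P, (X - C c) ^ 2) * Lagrange.interpolate S id f

section comparisonPoly

variable {P S : Finset ℝ} {f : ℝ → ℝ}

theorem eval_comparisonPoly (x : ℝ) : (comparisonPoly P S f).eval x =
    1 - (∏ c ∈ P, (x - c) ^ 2) * (Lagrange.interpolate S id f).eval x := by
  simp [comparisonPoly, eval_prod]

theorem monic_prod_X_sub_C_sq (P : Finset ℝ) : (∏ c ∈ P, (X - C c) ^ 2).Monic :=
  monic_prod_of_monic _ _ fun c _ => (monic_X_sub_C c).pow 2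

theorem natDegree_prod_X_sub_C_sq (P : Finset ℝ) :
    (∏ c ∈ P, (X - C c) ^ 2).natDegree = 2 * #P := by
  rw [natDegree_prod_of_monic _ _ fun c _ => (monic_X_sub_C c).pow 2]
  simp [mul_comm]

theorem natDegree_comparisonPoly_le {N : ℕ} (hcard : #S = N + 1) :
    (comparisonPoly P S f).natDegree ≤ 2 * #P + N := by
  refine (natDegree_sub_le _ _).trans (max_le (by simp) (natDegree_mul_le.trans ?_))
  rw [natDegree_prod_X_sub_C_sq]
  gcongr
  exact Lagrange.natDegree_interpolate_id_le hcard

theorem coeff_comparisonPoly {N : ℕ} (hcard : #S = N + 1) (hPN : 2 * #P + N ≠ 0) :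
    (comparisonPoly P S f).coeff (2 * #P + N) = -(Lagrange.interpolate S id f).coeff N := by
  rw [comparisonPoly, coeff_sub, coeff_one, if_neg hPN,
    coeff_mul_add_eq_of_natDegree_le (natDegree_prod_X_sub_C_sq P).le
      (Lagrange.natDegree_interpolate_id_le hcard), ← natDegree_prod_X_sub_C_sq P,
    (monic_prod_X_sub_C_sq P).coeff_natDegree]
  ring

theorem eval_comparisonPoly_of_mem (hc : c ∈ P) : (comparisonPoly P S f).eval c = 1 := by
  simp [eval_comparisonPoly, prod_eq_zero hc]

variable {F : ℕ → ℝ → ℝ} {b x : ℝ}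

theorem eval_comparisonPoly_eq_mul_sub (hx : F 0 x * ∏ c ∈ P, (x - c) ^ 2 = 1) :
    (comparisonPoly P S (F 0)).eval x =
      (∏ c ∈ P, (x - c) ^ 2) * (F 0 x - (Lagrange.interpolate S id (F 0)).eval x) := by
  rw [eval_comparisonPoly, mul_sub, mul_comm _ (F 0 x), hx]

theorem eval_comparisonPoly_of_mem_nodes {y : ℝ} (hy : y ∈ S)
    (hyP : F 0 y * ∏ c ∈ P, (y - c) ^ 2 = 1) : (comparisonPoly P S (F 0)).eval y = 0 := by
  rw [eval_comparisonPoly_eq_mul_sub hyP, Lagrange.eval_interpolate_id hy, sub_self, mul_zero]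

theorem coeff_comparisonPoly_nonpos (hF : IsCompletelyMonotoneOn F (Ici b))
    (hFP : ∀ x ∈ Ici b, F 0 x * ∏ c ∈ P, (x - c) ^ 2 = 1) (hbS : b ∈ S) (hS : ↑S ⊆ Ici b)
    {N : ℕ} (hcard : #S = 2 * N + 1) : (comparisonPoly P S (F 0)).coeff (2 * #P + 2 * N) ≤ 0 := by
  by_cases h0 : 2 * #P + 2 * N = 0
  · -- a constant vanishing at the node `b`
    have hb := eval_comparisonPoly_of_mem_nodes hbS (hFP b (hS hbS))
    rw [eq_C_of_natDegree_le_zero (p := comparisonPoly P S (F 0))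
      (h0 ▸ natDegree_comparisonPoly_le hcard), eval_C] at hb
    rw [h0, hb]
  · rw [coeff_comparisonPoly hcard h0, neg_nonpos]
    simpa [pow_mul] using hF.coeff_interpolate_nonneg hS hcard

theorem eval_comparisonPoly_le_one (hF : IsCompletelyMonotoneOn F (Ici b)) (hS : ↑S ⊆ Ici b)
    (hx : x ≤ b) : (comparisonPoly P S (F 0)).eval x ≤ 1 := by
  have := hF.eval_interpolate_nonneg hS fun y hy => hx.trans (hS hy)
  rw [eval_comparisonPoly, sub_le_self_iff]
  exact mul_nonneg (prod_nonneg fun c _ => sq_nonneg _) this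

theorem eval_comparisonPoly_nonpos (hF : IsCompletelyMonotoneOn F (Ici b))
    (hFP : ∀ x ∈ Ici b, F 0 x * ∏ c ∈ P, (x - c) ^ 2 = 1) (hS : ↑S ⊆ Ici b) {N : ℕ}
    (hcard : #S = 2 * N + 1) (hx : b ≤ x) (hω : 0 ≤ ∏ y ∈ S, (x - y)) :
    (comparisonPoly P S (F 0)).eval x ≤ 0 := by
  rw [eval_comparisonPoly_eq_mul_sub (hFP x hx)]
  exact mul_nonpos_of_nonneg_of_nonpos (prod_nonneg fun c _ => sq_nonneg _)
    (sub_nonpos.2 (hF.eval_le_eval_interpolate hS hcard hx hω))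

theorem eval_comparisonPoly_le_mul {Z U M : ℝ} (hF : HasDerivChainOn F (Icc b Z))
    (hFP : ∀ x ∈ Icc b Z, F 0 x * ∏ c ∈ P, (x - c) ^ 2 = 1) (hS : ↑S ⊆ Icc b Z) {L : ℕ}
    (hcard : #S = L + 1) (hU : ∀ x ∈ Icc b Z, |∏ c ∈ P, (x - c) ^ 2| ≤ U)
    (hM : ∀ x ∈ Icc b Z, |F (L + 1) x| ≤ M) (hx : x ∈ Icc b Z) :
    (comparisonPoly P S (F 0)).eval x ≤ U * (M / (L + 1)! * |∏ y ∈ S, (x - y)|) := by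
  rw [eval_comparisonPoly_eq_mul_sub (hFP x hx)]
  refine (le_abs_self _).trans ?_
  rw [abs_mul]
  exact mul_le_mul (hU x hx) (hF.abs_sub_eval_interpolate_le hS hcard hM hx) (abs_nonneg _)
    ((abs_nonneg _).trans (hU x hx))

end comparisonPoly

/-- Away from the gaps `(z, z + δ)` the comparison polynomial is `≤ 0` on `[b, ∞)`; inside a gap
the nodal polynomial has the factor `x - z` of size `< δ`. -/
theorem eval_comparisonPoly_pairedNodes_le {b δ Z U M : ℝ} {P R : Finset ℝ} {F : ℕ → ℝ → ℝ}
    (hF : IsCompletelyMonotoneOn F (Ici b)) (hFP : ∀ x ∈ Ici b, F 0 x * ∏ c ∈ P, (x - c) ^ 2 = 1)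
    (hR : ∀ z ∈ R, b < z) (hδ : 0 < δ) (hdisj : ∀ z ∈ R, ∀ z' ∈ R, z + δ ≠ z')
    (hSZ : ↑(pairedNodes b δ R) ⊆ Icc b Z) (hU : ∀ x ∈ Icc b Z, |∏ c ∈ P, (x - c) ^ 2| ≤ U)
    (hM : ∀ x ∈ Icc b Z, |F (2 * #R + 1) x| ≤ M) (x : ℝ) :
    (comparisonPoly P (pairedNodes b δ R) (F 0)).eval x ≤
      (Iio b).indicator 1 x + U * (M / (2 * #R + 1)! * (Z - b) ^ (2 * #R)) * δ := by
  set S := pairedNodes b δ R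
  have hcard := card_pairedNodes hR hδ hdisj
  have hSb := pairedNodes_subset_Ici hR hδ
  have hbZ : b ∈ Icc b Z := hSZ (mem_insert_self b _)
  have hK : 0 ≤ U * (M / (2 * #R + 1)! * (Z - b) ^ (2 * #R)) * δ := by
    have := (abs_nonneg _).trans (hU b hbZ)
    have := (abs_nonneg _).trans (hM b hbZ)
    have := pow_nonneg (sub_nonneg.2 hbZ.2) (2 * #R)
    positivity
  rcases lt_or_ge x b with hxb | hbx
  · rw [indicator_of_mem (Set.mem_Iio.2 hxb), Pi.one_apply]
    linarith [eval_comparisonPoly_le_one (P := P) hF hSb hxb.le]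
  have hxI : x ∉ Set.Iio b := not_lt.2 hbx
  rw [indicator_of_notMem hxI, zero_add]
  by_cases hgap : ∃ z ∈ R, x ∈ Ioo z (z + δ)
  · obtain ⟨z, hz, hxz⟩ := hgap
    have hzδ : z + δ ∈ S := mem_insert_of_mem (mem_union_right _ (mem_image_of_mem _ hz))
    have hxZ : x ∈ Icc b Z := ⟨hbx, hxz.2.le.trans (hSZ hzδ).2⟩
    have hω : |∏ y ∈ S, (x - y)| ≤ δ * (Z - b) ^ (2 * #R) := by
      have := abs_prod_sub_le_mul_pow (S := S) (mem_insert_of_mem (mem_union_left _ hz)) (x := x)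
        (ℓ := Z - b) fun y hy =>
          abs_sub_le_iff.2 ⟨by linarith [(hSZ hy).1, hxZ.2], by linarith [(hSZ hy).2, hxZ.1]⟩
      rw [hcard, Nat.add_sub_cancel] at this
      refine this.trans (mul_le_mul_of_nonneg_right ?_ (pow_nonneg (sub_nonneg.2 hbZ.2) _))
      rw [abs_le]
      constructor <;> linarith [hxz.1, hxz.2]
    calc (comparisonPoly P S (F 0)).eval x
        ≤ U * (M / (2 * #R + 1)! * |∏ y ∈ S, (x - y)|) :=
          eval_comparisonPoly_le_mul (hF.hasDerivChainOn.mono Icc_subset_Ici_self)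
            (fun y hy => hFP y hy.1) hSZ hcard hU hM hxZ
      _ ≤ U * (M / (2 * #R + 1)! * (δ * (Z - b) ^ (2 * #R))) := by
          have := (abs_nonneg _).trans (hU b hbZ)
          have := (abs_nonneg _).trans (hM b hbZ)
          gcongr
      _ = U * (M / (2 * #R + 1)! * (Z - b) ^ (2 * #R)) * δ := by ring
  · simp only [not_exists, not_and] at hgap
    exact (eval_comparisonPoly_nonpos hF hFP hSb hcard hbx
      (prod_pairedNodes_nonneg hR hδ hdisj hbx hgap)).trans hK

theorem exists_poly_le_indicator_Iio_add_mul {b : ℝ} {P R : Finset ℝ} (hP : ∀ c ∈ P, c < b)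
    (hR : ∀ z ∈ R, b < z) : ∃ K : ℝ, ∀ᶠ δ in 𝓝[>] (0 : ℝ), ∃ q : ℝ[X],
      q.natDegree ≤ 2 * (#P + #R) ∧ q.coeff (2 * (#P + #R)) ≤ 0 ∧ (∀ c ∈ P, q.eval c = 1) ∧
      (∀ y ∈ insert b R, q.eval y = 0) ∧ ∀ x, q.eval x ≤ (Iio b).indicator 1 x + K * δ := by
  obtain ⟨F, hF, hFP⟩ := exists_isCompletelyMonotoneOn_mul_prod_eq_one P hP
  obtain ⟨Z₀, hZ₀⟩ := R.bddAbove
  set Z := max b Z₀ + 1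
  obtain ⟨U, hU⟩ := (isCompact_Icc (a := b) (b := Z)).exists_bound_of_continuousOn
    (f := fun x => ∏ c ∈ P, (x - c) ^ 2) (by fun_prop)
  obtain ⟨M, hM⟩ := (isCompact_Icc (a := b) (b := Z)).exists_bound_of_continuousOn
    (f := F (2 * #R + 1)) fun x hx => (hF.hasDerivChainOn _ x hx.1).continuousAt.continuousWithinAt
  refine ⟨U * (M / (2 * #R + 1)! * (Z - b) ^ (2 * #R)), ?_⟩
  filter_upwards [self_mem_nhdsWithin, nhdsWithin_le_nhds (Iio_mem_nhds one_pos),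
    eventually_forall_add_ne R] with δ (hδ : 0 < δ) (hδ1 : δ < 1) hdisj
  set S := pairedNodes b δ R
  have hSb := pairedNodes_subset_Ici hR hδ
  have hSZ : ↑S ⊆ Icc b Z := by
    intro y hy
    refine ⟨hSb hy, ?_⟩
    simp only [S, pairedNodes, coe_insert, coe_union, coe_image, Set.mem_insert_iff,
      Set.mem_union, mem_coe, Set.mem_image] at hy
    rcases hy with rfl | hy | ⟨z, hz, rfl⟩
    · linarith [le_max_left y Z₀]
    · linarith [hZ₀ hy, le_max_right b Z₀]
    · linarith [hZ₀ hz, le_max_right b Z₀]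
  have hcard := card_pairedNodes hR hδ hdisj
  refine ⟨comparisonPoly P S (F 0), ?_, ?_, fun c hc => eval_comparisonPoly_of_mem hc,
    fun y hy => ?_, eval_comparisonPoly_pairedNodes_le hF hFP hR hδ hdisj hSZ
      (fun y hy => by rw [← Real.norm_eq_abs]; exact hU y hy)
      (fun y hy => by rw [← Real.norm_eq_abs]; exact hM y hy)⟩
  · rw [mul_add]
    exact natDegree_comparisonPoly_le hcard
  · rw [mul_add]
    exact coeff_comparisonPoly_nonpos hF hFP (mem_insert_self b _) hSb hcard
  · have hyS : y ∈ S := insert_subset_insert b subset_union_left hy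
    exact eval_comparisonPoly_of_mem_nodes hyS (hFP y (hSb hyS))

theorem exists_poly_le_indicator_Iio_add {b : ℝ} {P R : Finset ℝ} (hP : ∀ c ∈ P, c < b)
    (hR : ∀ z ∈ R, b < z) {ε : ℝ} (hε : 0 < ε) : ∃ q : ℝ[X],
      q.natDegree ≤ 2 * (#P + #R) ∧ q.coeff (2 * (#P + #R)) ≤ 0 ∧ (∀ c ∈ P, q.eval c = 1) ∧
      (∀ y ∈ insert b R, q.eval y = 0) ∧ ∀ x, q.eval x ≤ (Iio b).indicator 1 x + ε := by
  obtain ⟨K, hK⟩ := exists_poly_le_indicator_Iio_add_mul hP hR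
  have hlim : Tendsto (fun δ => K * δ) (𝓝[>] 0) (𝓝 0) :=
    tendsto_nhdsWithin_of_tendsto_nhds (by simpa using (continuous_const_mul K).tendsto 0)
  obtain ⟨δ, ⟨q, hdeg, hcoeff, hP, hR, hle⟩, hδ⟩ := (hK.and (hlim.eventually_lt_const hε)).exists
  exact ⟨q, hdeg, hcoeff, hP, hR, fun x => (hle x).trans (by linarith)⟩

theorem Polynomial.coeff_comp_neg_X {R : Type*} [CommRing R] (p : R[X]) (n : ℕ) :
    (p.comp (-X)).coeff n = (-1) ^ n * p.coeff n := by
  induction p using Polynomial.induction_on' with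
  | add p q hp hq => simp [add_comp, hp, hq, mul_add]
  | monomial k a =>
    rw [← C_mul_X_pow_eq_monomial, mul_comp, C_comp, X_pow_comp, neg_pow, ← mul_assoc, ← C_1,
      ← C_neg, ← C_pow, ← C_mul, coeff_C_mul_X_pow, coeff_C_mul_X_pow]
    split_ifs with h
    · rw [h]; ring
    · ring

section nodes

variable {n : ℕ} {t : Fin (n + 1) → ℝ}

theorem exists_poly_eval_eq_ite_lt (ht : StrictMono t) (k : Fin (n + 1)) {ε : ℝ} (hε : 0 < ε) :
    ∃ q : ℝ[X], q.natDegree ≤ 2 * n ∧ q.coeff (2 * n) ≤ 0 ∧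
      (∀ j, q.eval (t j) = if j < k then 1 else 0) ∧
      ∀ x, q.eval x ≤ (Iio (t k)).indicator 1 x + ε := by
  have hcard : #((Finset.Iio k).image t) + #((Finset.Ioi k).image t) = n := by
    rw [card_image_of_injective _ ht.injective, card_image_of_injective _ ht.injective,
      Fin.card_Iio, Fin.card_Ioi]
    omega
  obtain ⟨q, hdeg, hcoeff, hP, hR, hle⟩ := exists_poly_le_indicator_Iio_add (b := t k)
    (P := (Finset.Iio k).image t) (R := (Finset.Ioi k).image t)
    (by simpa using fun j hj => ht hj) (by simpa using fun j hj => ht hj) hε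
  rw [hcard] at hdeg hcoeff
  refine ⟨q, hdeg, hcoeff, fun j => ?_, hle⟩
  rcases lt_trichotomy j k with h | rfl | h
  · rw [if_pos h]
    exact hP _ (mem_image_of_mem t (Finset.mem_Iio.2 h))
  · rw [if_neg (lt_irrefl _)]
    exact hR _ (mem_insert_self _ _)
  · rw [if_neg h.not_gt]
    exact hR _ (mem_insert_of_mem (mem_image_of_mem t (Finset.mem_Ioi.2 h)))

theorem exists_poly_eval_eq_ite_gt (ht : StrictMono t) (k : Fin (n + 1)) {ε : ℝ} (hε : 0 < ε) :
    ∃ q : ℝ[X], q.natDegree ≤ 2 * n ∧ q.coeff (2 * n) ≤ 0 ∧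
      (∀ j, q.eval (t j) = if k < j then 1 else 0) ∧
      ∀ x, q.eval x ≤ (Ioi (t k)).indicator 1 x + ε := by
  obtain ⟨q, hdeg, hcoeff, hval, hle⟩ := exists_poly_eval_eq_ite_lt (t := fun j => -t j.rev)
    (fun i j h => neg_lt_neg (ht (Fin.rev_lt_rev.2 h))) k.rev hε
  refine ⟨q.comp (-X), ?_, ?_, fun j => ?_, fun x => ?_⟩
  · simpa [natDegree_comp] using hdeg
  · simpa [coeff_comp_neg_X, pow_mul] using hcoeff
  · simpa [Fin.rev_lt_rev] using hval j.rev
  · have : (Iio (-t k)).indicator (1 : ℝ → ℝ) (-x) = (Ioi (t k)).indicator 1 x := by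
      simp [indicator_apply, neg_lt_neg_iff]
    simpa [this] using hle (-x)

end nodes

/-! ### Quadrature rules below the integral -/

def IsLowerQuadrature (μ : Measure ℝ) (n : ℕ) (t w : Fin (n + 1) → ℝ) : Prop :=
  ∀ q : ℝ[X], q.natDegree ≤ 2 * n → q.coeff (2 * n) ≤ 0 →
    ∑ j, w j * q.eval (t j) ≤ ∫ x, q.eval x ∂μ

section quadrature

variable {μ : Measure ℝ} [IsFiniteMeasure μ] {n : ℕ} {t w : Fin (n + 1) → ℝ}

theorem sum_le_measureReal_of_forall_poly
    (hint : ∀ q : ℝ[X], Integrable (fun x => q.eval x) μ)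
    (hquad : IsLowerQuadrature μ n t w)
    {J : Finset (Fin (n + 1))} {A : Set ℝ} (hA : MeasurableSet A)
    (h : ∀ ε > 0, ∃ q : ℝ[X], q.natDegree ≤ 2 * n ∧ q.coeff (2 * n) ≤ 0 ∧
      (∀ j, q.eval (t j) = if j ∈ J then 1 else 0) ∧ ∀ x, q.eval x ≤ A.indicator 1 x + ε) :
    ∑ j ∈ J, w j ≤ μ.real A := by
  refine le_of_forall_pos_le_add fun ε hε => ?_
  set ε' := ε / (μ.real univ + 1)
  obtain ⟨q, hdeg, hcoeff, hval, hle⟩ := h ε' (by positivity)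
  have hA1 : Integrable (A.indicator 1) μ := (integrable_const (1 : ℝ)).indicator hA
  calc ∑ j ∈ J, w j = ∑ j, w j * q.eval (t j) := by simp [hval]
    _ ≤ ∫ x, q.eval x ∂μ := hquad q hdeg hcoeff
    _ ≤ ∫ x, (A.indicator 1 x + ε') ∂μ := integral_mono (hint q) (hA1.add (integrable_const _)) hle
    _ = μ.real A + μ.real univ * ε' := by
      rw [integral_add hA1 (integrable_const _), integral_indicator_one hA, integral_const,
        smul_eq_mul]
    _ ≤ μ.real A + ε := by
      have : μ.real univ * ε' ≤ ε := by
        rw [mul_div_assoc', div_le_iff₀ (by positivity)]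
        nlinarith
      linarith

theorem sum_Iio_le_measureReal_Iio (hint : ∀ q : ℝ[X], Integrable (fun x => q.eval x) μ)
    (ht : StrictMono t) (hquad : IsLowerQuadrature μ n t w) (k : Fin (n + 1)) :
    ∑ j ∈ Finset.Iio k, w j ≤ μ.real (Iio (t k)) :=
  sum_le_measureReal_of_forall_poly hint hquad measurableSet_Iio fun _ hε => by
    simpa using exists_poly_eval_eq_ite_lt ht k hε

theorem sum_Ioi_le_measureReal_Ioi (hint : ∀ q : ℝ[X], Integrable (fun x => q.eval x) μ)
    (ht : StrictMono t) (hquad : IsLowerQuadrature μ n t w) (k : Fin (n + 1)) :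
    ∑ j ∈ Finset.Ioi k, w j ≤ μ.real (Ioi (t k)) :=
  sum_le_measureReal_of_forall_poly hint hquad measurableSet_Ioi fun _ hε => by
    simpa using exists_poly_eval_eq_ite_gt ht k hε

theorem weight_le_measureReal_Iio (hint : ∀ q : ℝ[X], Integrable (fun x => q.eval x) μ)
    (ht : StrictMono t) (hquad : IsLowerQuadrature μ n t w) (hw : ∀ j, 0 ≤ w j) {j k : Fin (n + 1)}
    (hjk : j < k) : w j ≤ μ.real (Iio (t k)) :=
  (single_le_sum (fun i _ => hw i) (Finset.mem_Iio.2 hjk)).trans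
    (sum_Iio_le_measureReal_Iio hint ht hquad k)

theorem weight_le_measureReal_Ioi (hint : ∀ q : ℝ[X], Integrable (fun x => q.eval x) μ)
    (ht : StrictMono t) (hquad : IsLowerQuadrature μ n t w) (hw : ∀ j, 0 ≤ w j) {i j : Fin (n + 1)}
    (hij : i < j) : w j ≤ μ.real (Ioi (t i)) :=
  (single_le_sum (fun i _ => hw i) (Finset.mem_Ioi.2 hij)).trans
    (sum_Ioi_le_measureReal_Ioi hint ht hquad i)

/-- The bounds on `(-∞, t k)` and `(t i, ∞)` overlap in `(t i, t k)`, and the total weight is at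
least `μ ℝ` (take `q = -1`). -/
theorem weight_le_measureReal_Ioo (hint : ∀ q : ℝ[X], Integrable (fun x => q.eval x) μ)
    (ht : StrictMono t) (hquad : IsLowerQuadrature μ n t w) (hw : ∀ j, 0 ≤ w j)
    {i j k : Fin (n + 1)} (hij : i < j) (hjk : j < k) : w j ≤ μ.real (Ioo (t i) (t k)) := by
  have htotal : μ.real univ ≤ ∑ l, w l := by
    have := hquad (-1) (by simp) (by simp [coeff_one]; split_ifs <;> norm_num)
    simp only [eval_neg, eval_one, mul_neg, mul_one, sum_neg_distrib, integral_neg,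
      integral_const, smul_eq_mul] at this
    linarith
  have hcover : Finset.Ioi i ∪ Finset.Iio k = Finset.univ := by
    ext l
    simp only [Finset.mem_union, Finset.mem_Ioi, Finset.mem_Iio, Finset.mem_univ, iff_true]
    by_contra! h
    exact absurd (h.2.trans h.1) (hij.trans hjk).not_ge
  have hsum := sum_union_inter (s₁ := Finset.Ioi i) (s₂ := Finset.Iio k) (f := w)
  rw [hcover] at hsum
  have hj : w j ≤ ∑ l ∈ Finset.Ioi i ∩ Finset.Iio k, w l :=
    single_le_sum (fun l _ => hw l) (mem_inter.2 ⟨Finset.mem_Ioi.2 hij, Finset.mem_Iio.2 hjk⟩)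
  have hmeas := measureReal_union_add_inter (μ := μ) (s := Iio (t k)) (t := Ioi (t i))
    measurableSet_Ioi
  rw [Iio_union_Ioi_of_lt (ht (hij.trans hjk)), Iio_inter_Ioi] at hmeas
  linarith [sum_Iio_le_measureReal_Iio hint ht hquad k, sum_Ioi_le_measureReal_Ioi hint ht hquad i]

end quadrature

theorem integral_sub_sum_eq_coeff_mul_integral_sq {μ : Measure ℝ}
    (hint : ∀ q : ℝ[X], Integrable (fun x => q.eval x) μ) {ι : Type*} [Fintype ι] {m : ℕ}
    {π : ℝ[X]} (hπ : π.Monic) (hπm : π.natDegree = m) {x w : ι → ℝ}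
    (hzero : ∀ j, π.eval (x j) = 0)
    (hexact : ∀ q : ℝ[X], q.natDegree ≤ 2 * m - 1 → ∑ j, w j * q.eval (x j) = ∫ y, q.eval y ∂μ)
    {q : ℝ[X]} (hq : q.natDegree ≤ 2 * m) :
    ∫ y, q.eval y ∂μ - ∑ j, w j * q.eval (x j) = q.coeff (2 * m) * ∫ y, π.eval y ^ 2 ∂μ := by
  have hπint : Integrable (fun y => π.eval y ^ 2) μ := by
    have := hint (π ^ 2)
    simp only [eval_pow] at this
    exact this
  set r := q - C (q.coeff (2 * m)) * π ^ 2
  have hπ2 : (π ^ 2).natDegree = 2 * m := by rw [hπ.natDegree_pow, hπm]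
  have hr : r.natDegree ≤ 2 * m - 1 := by
    refine natDegree_le_pred ((natDegree_sub_le_of_le hq
      (natDegree_C_mul_le _ _ |>.trans hπ2.le)).trans (max_self _).le) ?_
    rw [coeff_sub, coeff_C_mul, ← hπ2, (hπ.pow 2).coeff_natDegree, mul_one, sub_self]
  have hsum : ∑ j, w j * q.eval (x j) = ∑ j, w j * r.eval (x j) := by simp [r, hzero]
  have hintr : ∫ y, r.eval y ∂μ = ∫ y, q.eval y ∂μ - q.coeff (2 * m) * ∫ y, π.eval y ^ 2 ∂μ := by
    simp only [r, eval_sub, eval_mul, eval_C, eval_pow]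
    rw [integral_sub (hint q) (hπint.const_mul _), integral_const_mul]
  rw [hsum, hexact r hr, hintr]
  ring

/-- Nodes are `0`-indexed: `x*_k` of the paper is `xs ⟨k - 1, _⟩`. -/
theorem stmt3
    (μ : Measure ℝ)
    (hint : ∀ q : Polynomial ℝ, Integrable (fun x => q.eval x) μ)
    (p : ℕ → Polynomial ℝ)
    (hmonic : ∀ n, (p n).Monic)
    (hdeg : ∀ n, (p n).natDegree = n)
    (m : ℕ) (hm : 1 ≤ m)
    (βm βm1 : ℝ)
    (hβmpos : 0 < βm) (hβm1pos : 0 < βm1)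
    (xG wG : Fin m → ℝ)
    (hzeros : ∀ j, (p m).eval (xG j) = 0)
    (hGauss : ∀ q : Polynomial ℝ, q.natDegree ≤ 2 * m - 1 →
      ∑ j, wG j * q.eval (xG j) = ∫ x, q.eval x ∂μ)
    (xs ws : Fin (m + 1) → ℝ)
    (hxs : StrictMono xs)
    (hws : ∀ k, 0 < ws k)
    (hGstar : ∀ q : Polynomial ℝ, q.natDegree ≤ 2 * m + 2 →
      ∑ k, ws k * q.eval (xs k) =
        (∫ x, q.eval x ∂μ) +
          (βm1 / βm) * ((∫ x, q.eval x ∂μ) - ∑ j, wG j * q.eval (xG j))) :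
    ws ⟨0, by omega⟩ ≤ (μ (Set.Iic (xs ⟨1, by omega⟩))).toReal ∧
    (∀ i : ℕ, ∀ _h1 : 1 ≤ i, ∀ _h2 : i ≤ m - 1,
      ws ⟨i, by omega⟩ ≤
        (μ (Set.Ioc (xs ⟨i - 1, by omega⟩) (xs ⟨i + 1, by omega⟩))).toReal) ∧
    ws ⟨m, by omega⟩ ≤ (μ (Set.Ioi (xs ⟨m - 1, by omega⟩))).toReal := by
  have : IsFiniteMeasure μ :=
    (integrable_const_iff.1 (by simpa using hint 1)).resolve_left one_ne_zero
  have hquad : IsLowerQuadrature μ m xs ws := by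
    intro q hq hcoeff
    rw [hGstar q (by omega), integral_sub_sum_eq_coeff_mul_integral_sq hint (hmonic m) (hdeg m)
      hzeros hGauss hq]
    have := mul_nonpos_of_nonpos_of_nonneg hcoeff
      (integral_nonneg (μ := μ) fun x => sq_nonneg ((p m).eval x))
    nlinarith [div_pos hβm1pos hβmpos]
  have hw k : 0 ≤ ws k := (hws k).le
  refine ⟨?_, fun i h1 h2 => ?_, ?_⟩
  · exact (weight_le_measureReal_Iio hint hxs hquad hw (by simp [Fin.lt_def])).trans
      (measureReal_mono Iio_subset_Iic_self)
  · exact (weight_le_measureReal_Ioo hint hxs hquad hw (by simp [Fin.lt_def]; omega)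
      (by simp [Fin.lt_def])).trans (measureReal_mono Ioo_subset_Ioc_self)
  · exact weight_le_measureReal_Ioi hint hxs hquad hw (by simp [Fin.lt_def]; omega)
end

section
/- (Theorem 5.1) All four blocks satisfy ‖Φ₁₁‖∞ < 1/2, ‖Φ₁₂‖∞ < 1/2, ‖Φ₂₁‖∞ < 1/2, ‖Φ₂₂‖∞ < 1/2; the matrices I_m + Φ₁₁ and I_{m+1} + Φ₂₂ are invertible; the block linear system (I_m+Φ₁₁)b + Φ₁₂ c = g, Φ₂₁ b + (I_{m+1}+Φ₂₂)c = g* has a unique solution (b, c) ∈ ℝ^m × ℝ^{m+1}; and for every initial vector c^{(0)} ∈ ℝ^{m+1}, the iterates defined by (I_m+Φ₁₁) b^{(k+1)} = g − Φ₁₂ c^{(k)} and (I_{m+1}+Φ₂₂) c^{(k+1)} = g* − Φ₂₁ b^{(k+1)} are well defined and converge to (b, c) as k → ∞. -/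
open Filter Matrix

/-- The block `θ · Λ · k(node_j, node_i)` arising in the Nyström linear system: column
weights `lam`, column nodes `knodes`, row nodes `enodes`. -/
noncomputable def nystromBlock {a b : ℕ} (θ : ℝ) (lam knodes : Fin b → ℝ)
    (enodes : Fin a → ℝ) (k : ℝ → ℝ → ℝ) : Matrix (Fin a) (Fin b) ℝ :=
  Matrix.of fun i j => θ * lam j * k (knodes j) (enodes i)

lemma nystrom_rowSum_le {a b : ℕ} {θ : ℝ} (hθ : 0 < θ) {lam : Fin b → ℝ}
    (hlam : ∀ j, 0 < lam j) {β₀ : ℝ} (hsum : ∑ j, lam j = β₀)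
    (kn : Fin b → ℝ) (en : Fin a → ℝ) {k : ℝ → ℝ → ℝ} {Mk : ℝ}
    (hkb : ∀ x y : ℝ, |k x y| ≤ Mk) (i : Fin a) :
    ∑ j, |nystromBlock θ lam kn en k i j| ≤ θ * β₀ * Mk := by
  calc ∑ j, |nystromBlock θ lam kn en k i j| ≤ ∑ j, θ * lam j * Mk := by
        refine Finset.sum_le_sum fun j _ => ?_
        simp only [nystromBlock, Matrix.of_apply]
        rw [abs_mul, abs_mul, abs_of_pos hθ, abs_of_pos (hlam j)]
        exact mul_le_mul_of_nonneg_left (hkb _ _) (mul_pos hθ (hlam j)).le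
    _ = θ * β₀ * Mk := by rw [← hsum, Finset.mul_sum, Finset.sum_mul]

lemma mulVec_norm_le' {a b : ℕ} (M : Matrix (Fin a) (Fin b) ℝ) {t : ℝ} (ht : 0 ≤ t)
    (h : ∀ i, ∑ j, |M i j| ≤ t) (v : Fin b → ℝ) :
    ‖M.mulVec v‖ ≤ t * ‖v‖ := by
  rw [pi_norm_le_iff_of_nonneg (by positivity)]
  intro i
  rw [Real.norm_eq_abs]
  have hmv : M.mulVec v i = ∑ j, M i j * v j := rfl
  rw [hmv]
  calc |∑ j, M i j * v j| ≤ ∑ j, |M i j * v j| := Finset.abs_sum_le_sum_abs _ _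
    _ ≤ ∑ j, |M i j| * ‖v‖ := by
        refine Finset.sum_le_sum fun j _ => ?_
        rw [abs_mul]
        refine mul_le_mul_of_nonneg_left ?_ (abs_nonneg _)
        rw [← Real.norm_eq_abs]; exact norm_le_pi_norm v j
    _ = (∑ j, |M i j|) * ‖v‖ := (Finset.sum_mul _ _ _).symm
    _ ≤ t * ‖v‖ := mul_le_mul_of_nonneg_right (h i) (norm_nonneg _)

lemma isUnit_one_add_of_bound {n : ℕ} {Φ : Matrix (Fin n) (Fin n) ℝ} {t : ℝ} (ht1 : t < 1)
    (h : ∀ v, ‖Φ.mulVec v‖ ≤ t * ‖v‖) : IsUnit (1 + Φ) := by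
  rw [← Matrix.mulVec_injective_iff_isUnit]
  intro u v huv
  have h0 : (1 + Φ).mulVec (u - v) = 0 := by
    rw [Matrix.mulVec_sub, huv, sub_self]
  rw [Matrix.add_mulVec, Matrix.one_mulVec] at h0
  have he : u - v = -(Φ.mulVec (u - v)) := by
    rw [eq_neg_iff_add_eq_zero]; exact h0
  have hnorm : ‖u - v‖ ≤ t * ‖u - v‖ := by
    calc ‖u - v‖ = ‖Φ.mulVec (u - v)‖ := by conv_lhs => rw [he, norm_neg]
      _ ≤ t * ‖u - v‖ := h _
  have : ‖u - v‖ ≤ 0 := by nlinarith [norm_nonneg (u - v)]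
  have := norm_le_zero_iff.mp this
  exact sub_eq_zero.mp this

lemma inv_mulVec_norm_le' {n : ℕ} {Φ : Matrix (Fin n) (Fin n) ℝ} {t : ℝ} (ht1 : t < 1)
    (h : ∀ v, ‖Φ.mulVec v‖ ≤ t * ‖v‖) (hU : IsUnit (1 + Φ)) (w : Fin n → ℝ) :
    ‖(↑hU.unit⁻¹ : Matrix (Fin n) (Fin n) ℝ).mulVec w‖ ≤ (1 - t)⁻¹ * ‖w‖ := by
  set z := (↑hU.unit⁻¹ : Matrix (Fin n) (Fin n) ℝ).mulVec w with hzdef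
  have hz : (1 + Φ).mulVec z = w := by
    rw [hzdef, Matrix.mulVec_mulVec, hU.mul_val_inv, Matrix.one_mulVec]
  rw [Matrix.add_mulVec, Matrix.one_mulVec] at hz
  have h2 : ‖z‖ ≤ ‖w‖ + t * ‖z‖ := by
    have hzw : z = w - Φ.mulVec z := by rw [← hz]; abel
    calc ‖z‖ = ‖w - Φ.mulVec z‖ := by rw [← hzw]
      _ ≤ ‖w‖ + ‖Φ.mulVec z‖ := norm_sub_le _ _
      _ ≤ ‖w‖ + t * ‖z‖ := by linarith [h z]
  have h1t : 0 < 1 - t := by linarith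
  rw [inv_mul_eq_div, le_div_iff₀ h1t]
  nlinarith

lemma block_system {p q : ℕ} (Φ₁₁ : Matrix (Fin p) (Fin p) ℝ) (Φ₁₂ : Matrix (Fin p) (Fin q) ℝ)
    (Φ₂₁ : Matrix (Fin q) (Fin p) ℝ) (Φ₂₂ : Matrix (Fin q) (Fin q) ℝ)
    {t : ℝ} (ht0 : 0 ≤ t) (ht : t < 1 / 2)
    (h11 : ∀ v, ‖Φ₁₁.mulVec v‖ ≤ t * ‖v‖) (h12 : ∀ v, ‖Φ₁₂.mulVec v‖ ≤ t * ‖v‖)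
    (h21 : ∀ v, ‖Φ₂₁.mulVec v‖ ≤ t * ‖v‖) (h22 : ∀ v, ‖Φ₂₂.mulVec v‖ ≤ t * ‖v‖)
    (hU₁ : IsUnit (1 + Φ₁₁)) (hU₂ : IsUnit (1 + Φ₂₂))
    (g : Fin p → ℝ) (gs : Fin q → ℝ) :
    (∃ (b : Fin p → ℝ) (c : Fin q → ℝ),
      ((1 + Φ₁₁).mulVec b + Φ₁₂.mulVec c = g ∧
        Φ₂₁.mulVec b + (1 + Φ₂₂).mulVec c = gs) ∧
      (∀ (b' : Fin p → ℝ) (c' : Fin q → ℝ),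
        (1 + Φ₁₁).mulVec b' + Φ₁₂.mulVec c' = g →
        Φ₂₁.mulVec b' + (1 + Φ₂₂).mulVec c' = gs →
        b' = b ∧ c' = c) ∧
      (∀ c₀ : Fin q → ℝ, ∃ (bs : ℕ → Fin p → ℝ) (cs : ℕ → Fin q → ℝ),
        cs 0 = c₀ ∧ ∀ n : ℕ,
          (1 + Φ₁₁).mulVec (bs (n + 1)) = g - Φ₁₂.mulVec (cs n) ∧
          (1 + Φ₂₂).mulVec (cs (n + 1)) = gs - Φ₂₁.mulVec (bs (n + 1))) ∧
      (∀ (bs : ℕ → Fin p → ℝ) (cs : ℕ → Fin q → ℝ),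
        (∀ n : ℕ,
          (1 + Φ₁₁).mulVec (bs (n + 1)) = g - Φ₁₂.mulVec (cs n) ∧
          (1 + Φ₂₂).mulVec (cs (n + 1)) = gs - Φ₂₁.mulVec (bs (n + 1))) →
        Tendsto bs atTop (nhds b) ∧ Tendsto cs atTop (nhds c))) := by
  have ht1 : t < 1 := by linarith
  have h1t : 0 < 1 - t := by linarith
  set Ai : Matrix (Fin p) (Fin p) ℝ := ↑hU₁.unit⁻¹ with hAi
  set Di : Matrix (Fin q) (Fin q) ℝ := ↑hU₂.unit⁻¹ with hDi
  have hAAi : ∀ v, (1 + Φ₁₁).mulVec (Ai.mulVec v) = v := fun v => by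
    rw [hAi, Matrix.mulVec_mulVec, hU₁.mul_val_inv, Matrix.one_mulVec]
  have hAiA : ∀ v, Ai.mulVec ((1 + Φ₁₁).mulVec v) = v := fun v => by
    rw [hAi, Matrix.mulVec_mulVec, hU₁.val_inv_mul, Matrix.one_mulVec]
  have hDDi : ∀ v, (1 + Φ₂₂).mulVec (Di.mulVec v) = v := fun v => by
    rw [hDi, Matrix.mulVec_mulVec, hU₂.mul_val_inv, Matrix.one_mulVec]
  have hDiD : ∀ v, Di.mulVec ((1 + Φ₂₂).mulVec v) = v := fun v => by
    rw [hDi, Matrix.mulVec_mulVec, hU₂.val_inv_mul, Matrix.one_mulVec]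
  have hAin : ∀ v, ‖Ai.mulVec v‖ ≤ (1 - t)⁻¹ * ‖v‖ := inv_mulVec_norm_le' ht1 h11 hU₁
  have hDin : ∀ v, ‖Di.mulVec v‖ ≤ (1 - t)⁻¹ * ‖v‖ := inv_mulVec_norm_le' ht1 h22 hU₂
  set κ : ℝ := (1 - t)⁻¹ * t with hκdef
  have hκ0 : 0 ≤ κ := mul_nonneg (inv_nonneg.mpr h1t.le) ht0
  have hκ1 : κ < 1 := by
    rw [hκdef, inv_mul_lt_iff₀ h1t]; linarith
  set L : (Fin q → ℝ) → Fin p → ℝ := fun c => Ai.mulVec (g - Φ₁₂.mulVec c) with hLdef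
  set f : (Fin q → ℝ) → Fin q → ℝ := fun c => Di.mulVec (gs - Φ₂₁.mulVec (L c)) with hfdef
  have hLsub : ∀ u v, L u - L v = Ai.mulVec (Φ₁₂.mulVec (v - u)) := by
    intro u v
    show Ai.mulVec (g - Φ₁₂.mulVec u) - Ai.mulVec (g - Φ₁₂.mulVec v) = _
    rw [← Matrix.mulVec_sub, Matrix.mulVec_sub Φ₁₂ v u]
    congr 1
    abel
  have hLlip : ∀ u v, ‖L u - L v‖ ≤ κ * ‖u - v‖ := by
    intro u v
    rw [hLsub]
    calc ‖Ai.mulVec (Φ₁₂.mulVec (v - u))‖ ≤ (1 - t)⁻¹ * ‖Φ₁₂.mulVec (v - u)‖ := hAin _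
      _ ≤ (1 - t)⁻¹ * (t * ‖v - u‖) :=
          mul_le_mul_of_nonneg_left (h12 _) (inv_nonneg.mpr h1t.le)
      _ = κ * ‖u - v‖ := by rw [norm_sub_rev, hκdef]; ring
  have hfsub : ∀ u v, f u - f v = Di.mulVec (Φ₂₁.mulVec (L v - L u)) := by
    intro u v
    show Di.mulVec (gs - Φ₂₁.mulVec (L u)) - Di.mulVec (gs - Φ₂₁.mulVec (L v)) = _
    rw [← Matrix.mulVec_sub, Matrix.mulVec_sub Φ₂₁ (L v) (L u)]
    congr 1
    abel
  have hflip : ∀ u v, ‖f u - f v‖ ≤ (κ * κ) * ‖u - v‖ := by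
    intro u v
    rw [hfsub]
    calc ‖Di.mulVec (Φ₂₁.mulVec (L v - L u))‖ ≤ (1 - t)⁻¹ * ‖Φ₂₁.mulVec (L v - L u)‖ := hDin _
      _ ≤ (1 - t)⁻¹ * (t * ‖L v - L u‖) :=
          mul_le_mul_of_nonneg_left (h21 _) (inv_nonneg.mpr h1t.le)
      _ ≤ (1 - t)⁻¹ * (t * (κ * ‖v - u‖)) := by
          refine mul_le_mul_of_nonneg_left (mul_le_mul_of_nonneg_left ?_ ht0)
            (inv_nonneg.mpr h1t.le)
          exact hLlip v u
      _ = (κ * κ) * ‖u - v‖ := by rw [norm_sub_rev, hκdef]; ring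
  set K : NNReal := ⟨κ * κ, mul_nonneg hκ0 hκ0⟩ with hKdef
  have hKcoe : (K : ℝ) = κ * κ := rfl
  have hcontr : ContractingWith K f := by
    constructor
    · rw [← NNReal.coe_lt_one, hKcoe]; nlinarith
    · refine LipschitzWith.of_dist_le_mul fun u v => ?_
      rw [dist_eq_norm, dist_eq_norm, hKcoe]
      exact hflip u v
  set c : Fin q → ℝ := ContractingWith.fixedPoint f hcontr with hcdef
  have hcfix : f c = c := hcontr.fixedPoint_isFixedPt
  set b : Fin p → ℝ := L c with hbdef
  have eq1 : (1 + Φ₁₁).mulVec b + Φ₁₂.mulVec c = g := by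
    show (1 + Φ₁₁).mulVec (Ai.mulVec (g - Φ₁₂.mulVec c)) + Φ₁₂.mulVec c = g
    rw [hAAi]
    abel
  have eq2 : Φ₂₁.mulVec b + (1 + Φ₂₂).mulVec c = gs := by
    have hc2 : (1 + Φ₂₂).mulVec c = gs - Φ₂₁.mulVec b := by
      conv_lhs => rw [← hcfix]
      exact hDDi (gs - Φ₂₁.mulVec b)
    rw [hc2]
    abel
  have key : ∀ (b' : Fin p → ℝ) (c' : Fin q → ℝ),
      (1 + Φ₁₁).mulVec b' + Φ₁₂.mulVec c' = g →
      Φ₂₁.mulVec b' + (1 + Φ₂₂).mulVec c' = gs → b' = L c' ∧ f c' = c' := by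
    intro b' c' e1 e2
    have hb' : b' = L c' := by
      rw [← hAiA b', eq_sub_of_add_eq e1]
    have h2 : (1 + Φ₂₂).mulVec c' = gs - Φ₂₁.mulVec (L c') := by
      rw [← hb']
      exact eq_sub_of_add_eq' e2
    refine ⟨hb', ?_⟩
    calc f c' = Di.mulVec (gs - Φ₂₁.mulVec (L c')) := rfl
      _ = Di.mulVec ((1 + Φ₂₂).mulVec c') := by rw [h2]
      _ = c' := hDiD c'
  refine ⟨b, c, ⟨eq1, eq2⟩, ?_, ?_, ?_⟩
  · intro b' c' e1 e2
    obtain ⟨hb', hc'⟩ := key b' c' e1 e2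
    have hcc : c' = c := hcontr.fixedPoint_unique hc'
    refine ⟨?_, hcc⟩
    rw [hb', hcc, ← hbdef]
  · intro c₀
    refine ⟨fun n => Nat.casesOn n 0 (fun nn => L (f^[nn] c₀)), fun n => f^[n] c₀, rfl, ?_⟩
    intro n
    constructor
    · exact hAAi _
    · show (1 + Φ₂₂).mulVec (f^[n + 1] c₀) = gs - Φ₂₁.mulVec (L (f^[n] c₀))
      rw [Function.iterate_succ_apply' f n c₀]
      exact hDDi _
  · intro bs cs hiter
    have hcs : ∀ n, cs (n + 1) = f (cs n) := by
      intro n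
      have h1 : bs (n + 1) = L (cs n) := by
        rw [← hAiA (bs (n + 1)), (hiter n).1]
      rw [← hDiD (cs (n + 1)), (hiter n).2, h1]
    have hpow : ∀ n, cs n = f^[n] (cs 0) := by
      intro n
      induction n with
      | zero => rfl
      | succ n ih =>
        rw [hcs n, ih]
        exact (Function.iterate_succ_apply' f n (cs 0)).symm
    have hcst : Tendsto cs atTop (nhds c) := by
      have hfun : cs = fun n => f^[n] (cs 0) := funext hpow
      rw [hfun]
      exact hcontr.tendsto_iterate_fixedPoint (cs 0)
    have hLcont : Continuous L := by
      have hlw : LipschitzWith ⟨κ, hκ0⟩ L :=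
        LipschitzWith.of_dist_le_mul fun u v => by
          rw [dist_eq_norm, dist_eq_norm]; exact hLlip u v
      exact hlw.continuous
    have hbst : Tendsto bs atTop (nhds b) := by
      rw [← tendsto_add_atTop_iff_nat 1]
      have h1 : (fun n => bs (n + 1)) = fun n => L (cs n) := by
        funext n
        rw [← hAiA (bs (n + 1)), (hiter n).1]
      rw [h1, hbdef]
      exact (hLcont.tendsto c).comp hcst
    exact ⟨hbst, hcst⟩

/-- Theorem 5.1: under `max(θ₁,θ₂)·β₀·‖k‖_∞ < 1/2`, the blocks have ∞-norm < 1/2,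
the diagonal blocks `I + Φ₁₁`, `I + Φ₂₂` are invertible, the block system has a unique
solution, and the iteration (5.2) is well defined and converges to it from any starting
vector. -/
theorem stmt12
    (m : ℕ) (hm : 1 ≤ m)
    (x : Fin m → ℝ) (xs : Fin (m + 1) → ℝ)
    (w : Fin m → ℝ) (ws : Fin (m + 1) → ℝ)
    (hw : ∀ j, 0 < w j) (hws : ∀ j, 0 < ws j)
    (β₀ : ℝ) (hβ₀ : 0 < β₀)
    (hwsum : ∑ j, w j = β₀) (hwssum : ∑ j, ws j = β₀)
    (θ₁ θ₂ : ℝ) (hθ₁ : 0 < θ₁) (hθ₂ : 0 < θ₂) (hθ : θ₁ + θ₂ = 1)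
    (k : ℝ → ℝ → ℝ) (Mk : ℝ) (hkb : ∀ a b : ℝ, |k a b| ≤ Mk)
    (hsmall : max θ₁ θ₂ * β₀ * Mk < 1 / 2)
    (g : Fin m → ℝ) (gs : Fin (m + 1) → ℝ) :
    -- all four blocks have maximum absolute row sum < 1/2
    (∀ i, ∑ j, |nystromBlock θ₁ w x x k i j| < 1 / 2) ∧
    (∀ i, ∑ j, |nystromBlock θ₂ ws xs x k i j| < 1 / 2) ∧
    (∀ i, ∑ j, |nystromBlock θ₁ w x xs k i j| < 1 / 2) ∧
    (∀ i, ∑ j, |nystromBlock θ₂ ws xs xs k i j| < 1 / 2) ∧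
    -- the diagonal blocks are invertible
    IsUnit (1 + nystromBlock θ₁ w x x k) ∧
    IsUnit (1 + nystromBlock θ₂ ws xs xs k) ∧
    -- unique solution and convergence of the iteration (5.2)
    (∃ (b : Fin m → ℝ) (c : Fin (m + 1) → ℝ),
      ((1 + nystromBlock θ₁ w x x k).mulVec b
          + (nystromBlock θ₂ ws xs x k).mulVec c = g ∧
        (nystromBlock θ₁ w x xs k).mulVec b
          + (1 + nystromBlock θ₂ ws xs xs k).mulVec c = gs) ∧
      (∀ (b' : Fin m → ℝ) (c' : Fin (m + 1) → ℝ),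
        (1 + nystromBlock θ₁ w x x k).mulVec b'
            + (nystromBlock θ₂ ws xs x k).mulVec c' = g →
        (nystromBlock θ₁ w x xs k).mulVec b'
            + (1 + nystromBlock θ₂ ws xs xs k).mulVec c' = gs →
        b' = b ∧ c' = c) ∧
      -- the iterates are well defined …
      (∀ c₀ : Fin (m + 1) → ℝ, ∃ (bs : ℕ → Fin m → ℝ) (cs : ℕ → Fin (m + 1) → ℝ),
        cs 0 = c₀ ∧ ∀ n : ℕ,
          (1 + nystromBlock θ₁ w x x k).mulVec (bs (n + 1))
            = g - (nystromBlock θ₂ ws xs x k).mulVec (cs n) ∧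
          (1 + nystromBlock θ₂ ws xs xs k).mulVec (cs (n + 1))
            = gs - (nystromBlock θ₁ w x xs k).mulVec (bs (n + 1))) ∧
      -- … and any iterates converge to the solution
      (∀ (bs : ℕ → Fin m → ℝ) (cs : ℕ → Fin (m + 1) → ℝ),
        (∀ n : ℕ,
          (1 + nystromBlock θ₁ w x x k).mulVec (bs (n + 1))
            = g - (nystromBlock θ₂ ws xs x k).mulVec (cs n) ∧
          (1 + nystromBlock θ₂ ws xs xs k).mulVec (cs (n + 1))
            = gs - (nystromBlock θ₁ w x xs k).mulVec (bs (n + 1))) →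
        Tendsto bs atTop (nhds b) ∧ Tendsto cs atTop (nhds c))) := by
  have hMk : 0 ≤ Mk := le_trans (abs_nonneg _) (hkb 0 0)
  set t : ℝ := max θ₁ θ₂ * β₀ * Mk with htdef
  have ht0 : 0 ≤ t := by
    have : 0 < max θ₁ θ₂ := lt_max_of_lt_left hθ₁
    positivity
  have hθ₁t : θ₁ * β₀ * Mk ≤ t := by
    rw [htdef]
    have h1 : θ₁ ≤ max θ₁ θ₂ := le_max_left _ _
    nlinarith [mul_nonneg hβ₀.le hMk]
  have hθ₂t : θ₂ * β₀ * Mk ≤ t := by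
    rw [htdef]
    have h1 : θ₂ ≤ max θ₁ θ₂ := le_max_right _ _
    nlinarith [mul_nonneg hβ₀.le hMk]
  have r11 : ∀ i, ∑ j, |nystromBlock θ₁ w x x k i j| ≤ t :=
    fun i => le_trans (nystrom_rowSum_le hθ₁ hw hwsum x x hkb i) hθ₁t
  have r12 : ∀ i, ∑ j, |nystromBlock θ₂ ws xs x k i j| ≤ t :=
    fun i => le_trans (nystrom_rowSum_le hθ₂ hws hwssum xs x hkb i) hθ₂t
  have r21 : ∀ i, ∑ j, |nystromBlock θ₁ w x xs k i j| ≤ t :=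
    fun i => le_trans (nystrom_rowSum_le hθ₁ hw hwsum x xs hkb i) hθ₁t
  have r22 : ∀ i, ∑ j, |nystromBlock θ₂ ws xs xs k i j| ≤ t :=
    fun i => le_trans (nystrom_rowSum_le hθ₂ hws hwssum xs xs hkb i) hθ₂t
  have ht : t < 1 / 2 := hsmall
  have ht1 : t < 1 := by linarith
  have b11 := mulVec_norm_le' _ ht0 r11
  have b12 := mulVec_norm_le' _ ht0 r12
  have b21 := mulVec_norm_le' _ ht0 r21
  have b22 := mulVec_norm_le' _ ht0 r22
  have hU₁ : IsUnit (1 + nystromBlock θ₁ w x x k) := isUnit_one_add_of_bound ht1 b11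
  have hU₂ : IsUnit (1 + nystromBlock θ₂ ws xs xs k) := isUnit_one_add_of_bound ht1 b22
  refine ⟨fun i => lt_of_le_of_lt (r11 i) ht, fun i => lt_of_le_of_lt (r12 i) ht,
    fun i => lt_of_le_of_lt (r21 i) ht, fun i => lt_of_le_of_lt (r22 i) ht,
    hU₁, hU₂, ?_⟩
  exact block_system _ _ _ _ ht0 ht b11 b12 b21 b22 hU₁ hU₂ g gs
end

section
/- (Theorem 5.2) All four blocks satisfy ‖Φ₁₁‖∞ < 1/2, ‖Φ₁₂‖∞ < 1/2, ‖Φ₂₁‖∞ < 1/2, ‖Φ₂₂‖∞ < 1/2; the block linear system (I_m+Φ₁₁)b + Φ₁₂ c = g, Φ₂₁ b + (I_{m+1}+Φ₂₂)c = g* has a unique solution (b, c); and for every initial vector c^{(0)} ∈ ℝ^{m+1}, the iterates defined by (I_m+Φ₁₁) b^{(k+1)} = g − Φ₁₂ c^{(k)} and (I_{m+1}+Φ₂₂) c^{(k+1)} = g* − Φ₂₁ b^{(k+1)} converge to (b, c) as k → ∞. -/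
open Filter Matrix MeasureTheory

lemma myMulVecNormLe {a b : ℕ} (Φ : Matrix (Fin a) (Fin b) ℝ) (q : ℝ)
    (h : ∀ i, ∑ j, |Φ i j| ≤ q) (hq : 0 ≤ q) (v : Fin b → ℝ) :
    ‖Φ.mulVec v‖ ≤ q * ‖v‖ := by
  rw [pi_norm_le_iff_of_nonneg (by positivity)]
  intro i
  have h1 : Φ.mulVec v i = ∑ j, Φ i j * v j := by
    simp [Matrix.mulVec, dotProduct]
  calc ‖Φ.mulVec v i‖ = |∑ j, Φ i j * v j| := by rw [h1, Real.norm_eq_abs]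
    _ ≤ ∑ j, |Φ i j * v j| := Finset.abs_sum_le_sum_abs _ _
    _ = ∑ j, |Φ i j| * |v j| := by simp [abs_mul]
    _ ≤ ∑ j, |Φ i j| * ‖v‖ := Finset.sum_le_sum fun j _ =>
        mul_le_mul_of_nonneg_left (by rw [← Real.norm_eq_abs]; exact norm_le_pi_norm v j) (abs_nonneg _)
    _ = (∑ j, |Φ i j|) * ‖v‖ := by rw [← Finset.sum_mul]
    _ ≤ q * ‖v‖ := mul_le_mul_of_nonneg_right (h i) (norm_nonneg _)

lemma mySolver {n : ℕ} (Φ : Matrix (Fin n) (Fin n) ℝ) (q : ℝ) (hq1 : q < 1)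
    (h : ∀ v, ‖Φ.mulVec v‖ ≤ q * ‖v‖) :
    ∃ S : (Fin n → ℝ) →ₗ[ℝ] (Fin n → ℝ),
      (∀ w, (1 + Φ).mulVec (S w) = w) ∧
      (∀ v, S ((1 + Φ).mulVec v) = v) ∧
      (∀ w, ‖S w‖ ≤ (1 - q)⁻¹ * ‖w‖) := by
  have hexp : ∀ v, (1 + Φ).mulVec v = v + Φ.mulVec v := by
    intro v; rw [Matrix.add_mulVec, Matrix.one_mulVec]
  have hinj : Function.Injective ((1 + Φ).mulVecLin) := by
    rw [injective_iff_map_eq_zero]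
    intro v hv
    rw [Matrix.mulVecLin_apply, hexp] at hv
    have hv2 : v = -(Φ.mulVec v) := by
      have := congrArg (· - Φ.mulVec v) hv
      simpa [add_sub_cancel_right] using this
    have heq : ‖v‖ = ‖Φ.mulVec v‖ := by conv_lhs => rw [hv2, norm_neg]
    have : ‖v‖ ≤ q * ‖v‖ := heq ▸ h v
    have hn : ‖v‖ ≤ 0 := by nlinarith [norm_nonneg v]
    exact norm_le_zero_iff.mp hn
  have hbij : Function.Bijective ((1 + Φ).mulVecLin) :=
    ⟨hinj, LinearMap.injective_iff_surjective.mp hinj⟩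
  let E := LinearEquiv.ofBijective _ hbij
  refine ⟨E.symm.toLinearMap, fun w => ?_, fun v => ?_, fun w => ?_⟩
  · have h1 := E.apply_symm_apply w
    simp only [E, LinearEquiv.ofBijective_apply, Matrix.mulVecLin_apply] at h1
    exact h1
  · have h1 := E.symm_apply_apply v
    simp only [E, LinearEquiv.ofBijective_apply, Matrix.mulVecLin_apply] at h1
    exact h1
  · set v := E.symm.toLinearMap w with hv
    have hw : w = v + Φ.mulVec v := by
      have := E.apply_symm_apply w
      rw [show E (E.symm w) = (1 + Φ).mulVec v from rfl, hexp] at this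
      exact this.symm
    have h2 : ‖v‖ ≤ ‖w‖ + q * ‖v‖ := by
      calc ‖v‖ = ‖w - Φ.mulVec v‖ := by rw [hw]; congr 1; abel
        _ ≤ ‖w‖ + ‖Φ.mulVec v‖ := norm_sub_le _ _
        _ ≤ ‖w‖ + q * ‖v‖ := by linarith [h v]
    rw [inv_mul_eq_div, le_div_iff₀ (by linarith)]
    nlinarith [norm_nonneg v, norm_nonneg w]

lemma nystromBlock_row_sum {a b : ℕ} (θ C : ℝ) (hθ : 0 ≤ θ) (lam knodes : Fin b → ℝ)
    (hlam : ∀ j, 0 ≤ lam j) (enodes : Fin a → ℝ) (k : ℝ → ℝ → ℝ)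
    (hquad : ∀ y, ∑ j, lam j * |k (knodes j) y| ≤ C) (i : Fin a) :
    ∑ j, |nystromBlock θ lam knodes enodes k i j| ≤ θ * C := by
  have heq : ∀ j : Fin b, |nystromBlock θ lam knodes enodes k i j|
      = θ * (lam j * |k (knodes j) (enodes i)|) := by
    intro j
    simp [nystromBlock, abs_mul, abs_of_nonneg hθ, abs_of_nonneg (hlam j), mul_assoc]
  rw [Finset.sum_congr rfl fun j _ => heq j, ← Finset.mul_sum]
  exact mul_le_mul_of_nonneg_left (hquad _) hθ

/-- Theorem 5.2: under `sup_y ‖k(·,y)‖_{L¹(μ)} ≤ M` with `max(θ₁,θ₂)·ρ·M < 1/2`, where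
`ρ` bounds the overestimation factor of the quadrature rules applied to `|k(·,y)|`, the
blocks have ∞-norm < 1/2, the block system has a unique solution, and the iteration
(5.2) converges to it from any starting vector. -/
theorem stmt13
    (m : ℕ) (hm : 1 ≤ m)
    (x : Fin m → ℝ) (xs : Fin (m + 1) → ℝ)
    (w : Fin m → ℝ) (ws : Fin (m + 1) → ℝ)
    (hw : ∀ j, 0 < w j) (hws : ∀ j, 0 < ws j)
    (θ₁ θ₂ : ℝ) (hθ₁ : 0 < θ₁) (hθ₂ : 0 < θ₂) (hθ : θ₁ + θ₂ = 1)
    (μ : Measure ℝ) (k : ℝ → ℝ → ℝ)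
    (M ρ : ℝ) (hM : 0 ≤ M) (hρ : 1 ≤ ρ)
    (hkM : ∀ y : ℝ, ∫ a, |k a y| ∂μ ≤ M)
    (hquadG : ∀ y : ℝ, ∑ j, w j * |k (x j) y| ≤ ρ * ∫ a, |k a y| ∂μ)
    (hquadS : ∀ y : ℝ, ∑ j, ws j * |k (xs j) y| ≤ ρ * ∫ a, |k a y| ∂μ)
    (hsmall : max θ₁ θ₂ * ρ * M < 1 / 2)
    (g : Fin m → ℝ) (gs : Fin (m + 1) → ℝ) :
    -- all four blocks have maximum absolute row sum < 1/2
    (∀ i, ∑ j, |nystromBlock θ₁ w x x k i j| < 1 / 2) ∧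
    (∀ i, ∑ j, |nystromBlock θ₂ ws xs x k i j| < 1 / 2) ∧
    (∀ i, ∑ j, |nystromBlock θ₁ w x xs k i j| < 1 / 2) ∧
    (∀ i, ∑ j, |nystromBlock θ₂ ws xs xs k i j| < 1 / 2) ∧
    -- unique solution and convergence of the iteration (5.2)
    (∃ (b : Fin m → ℝ) (c : Fin (m + 1) → ℝ),
      ((1 + nystromBlock θ₁ w x x k).mulVec b
          + (nystromBlock θ₂ ws xs x k).mulVec c = g ∧
        (nystromBlock θ₁ w x xs k).mulVec b
          + (1 + nystromBlock θ₂ ws xs xs k).mulVec c = gs) ∧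
      (∀ (b' : Fin m → ℝ) (c' : Fin (m + 1) → ℝ),
        (1 + nystromBlock θ₁ w x x k).mulVec b'
            + (nystromBlock θ₂ ws xs x k).mulVec c' = g →
        (nystromBlock θ₁ w x xs k).mulVec b'
            + (1 + nystromBlock θ₂ ws xs xs k).mulVec c' = gs →
        b' = b ∧ c' = c) ∧
      -- the iterates are well defined …
      (∀ c₀ : Fin (m + 1) → ℝ, ∃ (bs : ℕ → Fin m → ℝ) (cs : ℕ → Fin (m + 1) → ℝ),
        cs 0 = c₀ ∧ ∀ n : ℕ,
          (1 + nystromBlock θ₁ w x x k).mulVec (bs (n + 1))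
            = g - (nystromBlock θ₂ ws xs x k).mulVec (cs n) ∧
          (1 + nystromBlock θ₂ ws xs xs k).mulVec (cs (n + 1))
            = gs - (nystromBlock θ₁ w x xs k).mulVec (bs (n + 1))) ∧
      -- … and any iterates converge to the solution
      (∀ (bs : ℕ → Fin m → ℝ) (cs : ℕ → Fin (m + 1) → ℝ),
        (∀ n : ℕ,
          (1 + nystromBlock θ₁ w x x k).mulVec (bs (n + 1))
            = g - (nystromBlock θ₂ ws xs x k).mulVec (cs n) ∧
          (1 + nystromBlock θ₂ ws xs xs k).mulVec (cs (n + 1))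
            = gs - (nystromBlock θ₁ w x xs k).mulVec (bs (n + 1))) →
        Tendsto bs atTop (nhds b) ∧ Tendsto cs atTop (nhds c))) := by
  set Φ11 := nystromBlock θ₁ w x x k with hΦ11def
  set Φ12 := nystromBlock θ₂ ws xs x k with hΦ12def
  set Φ21 := nystromBlock θ₁ w x xs k with hΦ21def
  set Φ22 := nystromBlock θ₂ ws xs xs k with hΦ22def
  set q : ℝ := max θ₁ θ₂ * ρ * M with hqdef
  have hmax0 : 0 ≤ max θ₁ θ₂ := le_trans hθ₁.le (le_max_left _ _)
  have hρ0 : (0:ℝ) ≤ ρ := by linarith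
  have hρM : 0 ≤ ρ * M := mul_nonneg hρ0 hM
  have hq0 : 0 ≤ q := by rw [hqdef]; positivity
  have hqhalf : q < 1 / 2 := hsmall
  have hq1 : q < 1 := by linarith
  -- quadrature bounds with constant ρ * M
  have hG : ∀ y : ℝ, ∑ j, w j * |k (x j) y| ≤ ρ * M := fun y =>
    (hquadG y).trans (mul_le_mul_of_nonneg_left (hkM y) hρ0)
  have hS : ∀ y : ℝ, ∑ j, ws j * |k (xs j) y| ≤ ρ * M := fun y =>
    (hquadS y).trans (mul_le_mul_of_nonneg_left (hkM y) hρ0)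
  have hθq : ∀ θ : ℝ, θ ≤ max θ₁ θ₂ → θ * (ρ * M) ≤ q := by
    intro θ hθle
    rw [hqdef, mul_assoc]
    exact mul_le_mul_of_nonneg_right hθle hρM
  -- row sums of the four blocks
  have hrow11 : ∀ i, ∑ j, |Φ11 i j| ≤ q := fun i =>
    (nystromBlock_row_sum θ₁ (ρ * M) hθ₁.le w x (fun j => (hw j).le) x k hG i).trans
      (hθq θ₁ (le_max_left _ _))
  have hrow12 : ∀ i, ∑ j, |Φ12 i j| ≤ q := fun i =>
    (nystromBlock_row_sum θ₂ (ρ * M) hθ₂.le ws xs (fun j => (hws j).le) x k hS i).trans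
      (hθq θ₂ (le_max_right _ _))
  have hrow21 : ∀ i, ∑ j, |Φ21 i j| ≤ q := fun i =>
    (nystromBlock_row_sum θ₁ (ρ * M) hθ₁.le w x (fun j => (hw j).le) xs k hG i).trans
      (hθq θ₁ (le_max_left _ _))
  have hrow22 : ∀ i, ∑ j, |Φ22 i j| ≤ q := fun i =>
    (nystromBlock_row_sum θ₂ (ρ * M) hθ₂.le ws xs (fun j => (hws j).le) xs k hS i).trans
      (hθq θ₂ (le_max_right _ _))
  refine ⟨fun i => lt_of_le_of_lt (hrow11 i) hqhalf,
    fun i => lt_of_le_of_lt (hrow12 i) hqhalf,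
    fun i => lt_of_le_of_lt (hrow21 i) hqhalf,
    fun i => lt_of_le_of_lt (hrow22 i) hqhalf, ?_⟩
  -- mulVec norm bounds
  have hB11 := myMulVecNormLe Φ11 q hrow11 hq0
  have hB12 := myMulVecNormLe Φ12 q hrow12 hq0
  have hB21 := myMulVecNormLe Φ21 q hrow21 hq0
  have hB22 := myMulVecNormLe Φ22 q hrow22 hq0
  obtain ⟨SA, hSA1, hSA2, hSA3⟩ := mySolver Φ11 q hq1 hB11
  obtain ⟨SD, hSD1, hSD2, hSD3⟩ := mySolver Φ22 q hq1 hB22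
  set T : (Fin (m + 1) → ℝ) → (Fin (m + 1) → ℝ) :=
    fun cc => SD (gs - Φ21.mulVec (SA (g - Φ12.mulVec cc))) with hTdef
  -- Lipschitz constant
  set r : ℝ := (1 - q)⁻¹ * q with hrdef
  have h1q : (0:ℝ) < 1 - q := by linarith
  have hr0 : 0 ≤ r := mul_nonneg (inv_nonneg.mpr h1q.le) hq0
  have hr1 : r < 1 := by
    rw [hrdef, inv_mul_eq_div, div_lt_one h1q]; linarith
  set K : NNReal := ⟨r * r, mul_nonneg hr0 hr0⟩ with hKdef
  have hKcoe : (K : ℝ) = r * r := rfl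
  have hK1 : K < 1 := by
    rw [← NNReal.coe_lt_coe, hKcoe, NNReal.coe_one]
    nlinarith
  have hinv0 : (0:ℝ) ≤ (1 - q)⁻¹ := inv_nonneg.mpr h1q.le
  have hlip : LipschitzWith K T := by
    apply LipschitzWith.of_dist_le_mul
    intro c1 c2
    rw [dist_eq_norm, dist_eq_norm]
    have e1 : SA (g - Φ12.mulVec c2) - SA (g - Φ12.mulVec c1)
        = SA (Φ12.mulVec (c1 - c2)) := by
      rw [← map_sub]; congr 1; rw [Matrix.mulVec_sub]; abel
    have key : T c1 - T c2 = SD (Φ21.mulVec (SA (Φ12.mulVec (c1 - c2)))) := by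
      rw [hTdef]
      show SD _ - SD _ = _
      rw [← map_sub]
      congr 1
      calc (gs - Φ21.mulVec (SA (g - Φ12.mulVec c1)))
            - (gs - Φ21.mulVec (SA (g - Φ12.mulVec c2)))
          = Φ21.mulVec (SA (g - Φ12.mulVec c2)) - Φ21.mulVec (SA (g - Φ12.mulVec c1)) := by
            abel
        _ = Φ21.mulVec (SA (g - Φ12.mulVec c2) - SA (g - Φ12.mulVec c1)) := by
            rw [Matrix.mulVec_sub]
        _ = Φ21.mulVec (SA (Φ12.mulVec (c1 - c2))) := by rw [e1]
    rw [key]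
    calc ‖SD (Φ21.mulVec (SA (Φ12.mulVec (c1 - c2))))‖
        ≤ (1 - q)⁻¹ * ‖Φ21.mulVec (SA (Φ12.mulVec (c1 - c2)))‖ := hSD3 _
      _ ≤ (1 - q)⁻¹ * (q * ‖SA (Φ12.mulVec (c1 - c2))‖) := by
          exact mul_le_mul_of_nonneg_left (hB21 _) hinv0
      _ ≤ (1 - q)⁻¹ * (q * ((1 - q)⁻¹ * ‖Φ12.mulVec (c1 - c2)‖)) := by
          exact mul_le_mul_of_nonneg_left (mul_le_mul_of_nonneg_left (hSA3 _) hq0) hinv0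
      _ ≤ (1 - q)⁻¹ * (q * ((1 - q)⁻¹ * (q * ‖c1 - c2‖))) := by
          have := hB12 (c1 - c2)
          have h' : (1 - q)⁻¹ * ‖Φ12.mulVec (c1 - c2)‖ ≤ (1 - q)⁻¹ * (q * ‖c1 - c2‖) :=
            mul_le_mul_of_nonneg_left this hinv0
          exact mul_le_mul_of_nonneg_left (mul_le_mul_of_nonneg_left h' hq0) hinv0
      _ = (K : ℝ) * ‖c1 - c2‖ := by rw [hKcoe, hrdef]; ring
  have hcon : ContractingWith K T := ⟨hK1, hlip⟩
  set c : Fin (m + 1) → ℝ := ContractingWith.fixedPoint T hcon with hcdef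
  have hcfix : T c = c := hcon.fixedPoint_isFixedPt
  set b : Fin m → ℝ := SA (g - Φ12.mulVec c) with hbdef
  have hAb : (1 + Φ11).mulVec b = g - Φ12.mulVec c := hSA1 _
  have hDc : (1 + Φ22).mulVec c = gs - Φ21.mulVec b := by
    conv_lhs => rw [← hcfix]
    exact hSD1 _
  refine ⟨b, c, ⟨by rw [hAb]; abel, by rw [hDc]; abel⟩, ?_, ?_, ?_⟩
  · -- uniqueness
    intro b' c' h1 h2
    have hb' : b' = SA (g - Φ12.mulVec c') := by
      calc b' = SA ((1 + Φ11).mulVec b') := (hSA2 b').symm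
        _ = SA (g - Φ12.mulVec c') := by rw [eq_sub_of_add_eq h1]
    have hc'fix : Function.IsFixedPt T c' := by
      show T c' = c'
      calc T c' = SD (gs - Φ21.mulVec (SA (g - Φ12.mulVec c'))) := rfl
        _ = SD (gs - Φ21.mulVec b') := by rw [← hb']
        _ = SD ((1 + Φ22).mulVec c') := by rw [(eq_sub_of_add_eq' h2).symm]
        _ = c' := hSD2 _
    have hcc : c' = c := hcon.fixedPoint_unique hc'fix
    exact ⟨by rw [hb', hcc, hbdef], hcc⟩
  · -- existence of iterates
    intro c₀
    refine ⟨fun n => SA (g - Φ12.mulVec (T^[n - 1] c₀)), fun n => T^[n] c₀, rfl, fun n => ?_⟩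
    constructor
    · simp only [Nat.add_sub_cancel]
      exact hSA1 _
    · simp only [Nat.add_sub_cancel, Function.iterate_succ_apply']
      exact hSD1 _
  · -- convergence
    intro bs cs hrec
    have hbstep : ∀ n, bs (n + 1) = SA (g - Φ12.mulVec (cs n)) := by
      intro n
      calc bs (n + 1) = SA ((1 + Φ11).mulVec (bs (n + 1))) := (hSA2 _).symm
        _ = SA (g - Φ12.mulVec (cs n)) := by rw [(hrec n).1]
    have hstep : ∀ n, cs (n + 1) = T (cs n) := by
      intro n
      calc cs (n + 1) = SD ((1 + Φ22).mulVec (cs (n + 1))) := (hSD2 _).symm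
        _ = SD (gs - Φ21.mulVec (bs (n + 1))) := by rw [(hrec n).2]
        _ = T (cs n) := by rw [hbstep n]
    have hiter : ∀ n, cs n = T^[n] (cs 0) := by
      intro n
      induction n with
      | zero => rfl
      | succ n ih => rw [hstep n, ih, Function.iterate_succ_apply']
    have htc : Tendsto cs atTop (nhds c) := by
      rw [show cs = fun n => T^[n] (cs 0) from funext hiter]
      exact hcon.tendsto_iterate_fixedPoint (cs 0)
    refine ⟨?_, htc⟩
    have hcontSA : Continuous SA := SA.continuous_of_finiteDimensional
    have hcontΦ : Continuous (Φ12.mulVec) := Φ12.mulVecLin.continuous_of_finiteDimensional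
    have hG : Continuous (fun v : Fin (m + 1) → ℝ => SA (g - Φ12.mulVec v)) :=
      hcontSA.comp (continuous_const.sub hcontΦ)
    have h1 : Tendsto (fun n => SA (g - Φ12.mulVec (cs n))) atTop (nhds b) := by
      rw [hbdef]
      exact (hG.tendsto c).comp htc
    have h2 : Tendsto (fun n => bs (n + 1)) atTop (nhds b) := by
      simpa only [← hbstep] using h1
    exact (tendsto_add_atTop_iff_nat 1).mp h2
end

section
/- (Convergence of the Richardson-type iteration (5.3), Section 5) The block linear system (I_m+Φ₁₁)b + Φ₁₂ c = g, Φ₂₁ b + (I_{m+1}+Φ₂₂)c = g* has a unique solution (b, c) ∈ ℝ^m × ℝ^{m+1}, and for all initial vectors b^{(0)} ∈ ℝ^m, c^{(0)} ∈ ℝ^{m+1}, the iterates defined by b^{(k+1)} = g − Φ₁₁ b^{(k)} − Φ₁₂ c^{(k)} and c^{(k+1)} = g* − Φ₂₁ b^{(k+1)} − Φ₂₂ c^{(k)} converge to (b, c) as k → ∞. -/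
open Filter Matrix

lemma mulVec_dist_le {n p : ℕ} (A : Matrix (Fin n) (Fin p) ℝ) (K : ℝ)
    (hK : 0 ≤ K) (hA : ∀ i, ∑ j, |A i j| ≤ K) (x y : Fin p → ℝ) :
    dist (A.mulVec x) (A.mulVec y) ≤ K * dist x y := by
  rw [dist_pi_le_iff (mul_nonneg hK dist_nonneg)]
  intro i
  rw [Real.dist_eq]
  have : A.mulVec x i - A.mulVec y i = ∑ j, A i j * (x j - y j) := by
    simp [Matrix.mulVec, dotProduct, mul_sub, Finset.sum_sub_distrib]
  rw [this]
  calc |∑ j, A i j * (x j - y j)| ≤ ∑ j, |A i j * (x j - y j)| :=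
        Finset.abs_sum_le_sum_abs _ _
    _ = ∑ j, |A i j| * |x j - y j| := by simp [abs_mul]
    _ ≤ ∑ j, |A i j| * dist x y := by
        apply Finset.sum_le_sum
        intro j _
        exact mul_le_mul_of_nonneg_left
          (by rw [← Real.dist_eq]; exact dist_le_pi_dist x y j) (abs_nonneg _)
    _ = (∑ j, |A i j|) * dist x y := by rw [Finset.sum_mul]
    _ ≤ K * dist x y := mul_le_mul_of_nonneg_right (hA i) dist_nonneg

lemma dist_sub_sub_le' {E : Type*} [SeminormedAddCommGroup E] (a x y x' y' : E) :
    dist (a - x - y) (a - x' - y') ≤ dist x x' + dist y y' := by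
  rw [sub_sub, sub_sub, dist_sub_left]
  exact dist_add_add_le _ _ _ _

/-- Convergence of the Richardson-type iteration (5.3), Section 5: if all four blocks
have ∞-norm (maximum absolute row sum) < 1/2, the block system has a unique solution
and the Richardson-type iterates converge to it from any starting vectors. -/
theorem stmt15
    (m : ℕ) (hm : 1 ≤ m)
    (Φ₁₁ : Matrix (Fin m) (Fin m) ℝ)
    (Φ₁₂ : Matrix (Fin m) (Fin (m + 1)) ℝ)
    (Φ₂₁ : Matrix (Fin (m + 1)) (Fin m) ℝ)
    (Φ₂₂ : Matrix (Fin (m + 1)) (Fin (m + 1)) ℝ)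
    (h11 : ∀ i, ∑ j, |Φ₁₁ i j| < 1 / 2)
    (h12 : ∀ i, ∑ j, |Φ₁₂ i j| < 1 / 2)
    (h21 : ∀ i, ∑ j, |Φ₂₁ i j| < 1 / 2)
    (h22 : ∀ i, ∑ j, |Φ₂₂ i j| < 1 / 2)
    (g : Fin m → ℝ) (gs : Fin (m + 1) → ℝ) :
    ∃ (b : Fin m → ℝ) (c : Fin (m + 1) → ℝ),
      ((1 + Φ₁₁).mulVec b + Φ₁₂.mulVec c = g ∧
        Φ₂₁.mulVec b + (1 + Φ₂₂).mulVec c = gs) ∧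
      (∀ (b' : Fin m → ℝ) (c' : Fin (m + 1) → ℝ),
        (1 + Φ₁₁).mulVec b' + Φ₁₂.mulVec c' = g →
        Φ₂₁.mulVec b' + (1 + Φ₂₂).mulVec c' = gs →
        b' = b ∧ c' = c) ∧
      (∀ (bs : ℕ → Fin m → ℝ) (cs : ℕ → Fin (m + 1) → ℝ),
        (∀ n : ℕ,
          bs (n + 1) = g - Φ₁₁.mulVec (bs n) - Φ₁₂.mulVec (cs n) ∧
          cs (n + 1) = gs - Φ₂₁.mulVec (bs (n + 1)) - Φ₂₂.mulVec (cs n)) →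
        Tendsto bs atTop (nhds b) ∧ Tendsto cs atTop (nhds c)) := by
  have hmne : Nonempty (Fin m) := ⟨⟨0, hm⟩⟩
  obtain ⟨K, hK0, hKlt, hK11, hK12, hK21, hK22⟩ :
      ∃ K : ℝ, 0 ≤ K ∧ K < 1 / 2 ∧ (∀ i, ∑ j, |Φ₁₁ i j| ≤ K) ∧
        (∀ i, ∑ j, |Φ₁₂ i j| ≤ K) ∧ (∀ i, ∑ j, |Φ₂₁ i j| ≤ K) ∧
        (∀ i, ∑ j, |Φ₂₂ i j| ≤ K) := by
    refine ⟨max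
        (max (Finset.univ.sup' Finset.univ_nonempty (fun i => ∑ j, |Φ₁₁ i j|))
             (Finset.univ.sup' Finset.univ_nonempty (fun i => ∑ j, |Φ₁₂ i j|)))
        (max (Finset.univ.sup' Finset.univ_nonempty (fun i => ∑ j, |Φ₂₁ i j|))
             (Finset.univ.sup' Finset.univ_nonempty (fun i => ∑ j, |Φ₂₂ i j|))),
      ?_, ?_, ?_, ?_, ?_, ?_⟩
    · refine le_trans (Finset.sum_nonneg fun j _ => abs_nonneg _)
        (le_trans (Finset.le_sup' (fun i => ∑ j, |Φ₁₁ i j|)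
          (Finset.mem_univ (Classical.arbitrary _)))
          (le_trans (le_max_left _ _) (le_max_left _ _)))
    · apply max_lt <;> apply max_lt <;>
        simp only [Finset.sup'_lt_iff] <;> intro i _
      · exact h11 i
      · exact h12 i
      · exact h21 i
      · exact h22 i
    · exact fun i => le_trans (Finset.le_sup' (fun i => ∑ j, |Φ₁₁ i j|) (Finset.mem_univ i))
        (le_trans (le_max_left _ _) (le_max_left _ _))
    · exact fun i => le_trans (Finset.le_sup' (fun i => ∑ j, |Φ₁₂ i j|) (Finset.mem_univ i))
        (le_trans (le_max_right _ _) (le_max_left _ _))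
    · exact fun i => le_trans (Finset.le_sup' (fun i => ∑ j, |Φ₂₁ i j|) (Finset.mem_univ i))
        (le_trans (le_max_left _ _) (le_max_right _ _))
    · exact fun i => le_trans (Finset.le_sup' (fun i => ∑ j, |Φ₂₂ i j|) (Finset.mem_univ i))
        (le_trans (le_max_right _ _) (le_max_right _ _))
  clear h11 h12 h21 h22
  -- the iteration map
  set T : ((Fin m → ℝ) × (Fin (m + 1) → ℝ)) → ((Fin m → ℝ) × (Fin (m + 1) → ℝ)) :=
    fun p => (g - Φ₁₁.mulVec p.1 - Φ₁₂.mulVec p.2,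
      gs - Φ₂₁.mulVec (g - Φ₁₁.mulVec p.1 - Φ₁₂.mulVec p.2) - Φ₂₂.mulVec p.2) with hTdef
  have hTdist : ∀ p q, dist (T p) (T q) ≤ 2 * K * dist p q := by
    intro p q
    have D1 : dist p.1 q.1 ≤ dist p q := le_max_left _ _
    have D2 : dist p.2 q.2 ≤ dist p q := le_max_right _ _
    have hb : dist (g - Φ₁₁.mulVec p.1 - Φ₁₂.mulVec p.2)
        (g - Φ₁₁.mulVec q.1 - Φ₁₂.mulVec q.2) ≤ 2 * K * dist p q :=
      calc dist (g - Φ₁₁.mulVec p.1 - Φ₁₂.mulVec p.2) (g - Φ₁₁.mulVec q.1 - Φ₁₂.mulVec q.2)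
          ≤ dist (Φ₁₁.mulVec p.1) (Φ₁₁.mulVec q.1)
            + dist (Φ₁₂.mulVec p.2) (Φ₁₂.mulVec q.2) := dist_sub_sub_le' _ _ _ _ _
        _ ≤ K * dist p.1 q.1 + K * dist p.2 q.2 :=
            add_le_add (mulVec_dist_le _ K hK0 hK11 _ _) (mulVec_dist_le _ K hK0 hK12 _ _)
        _ ≤ K * dist p q + K * dist p q :=
            add_le_add (mul_le_mul_of_nonneg_left D1 hK0) (mul_le_mul_of_nonneg_left D2 hK0)
        _ = 2 * K * dist p q := by ring
    have hc : dist (T p).2 (T q).2 ≤ 2 * K * dist p q :=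
      calc dist (T p).2 (T q).2
          ≤ dist (Φ₂₁.mulVec (g - Φ₁₁.mulVec p.1 - Φ₁₂.mulVec p.2))
              (Φ₂₁.mulVec (g - Φ₁₁.mulVec q.1 - Φ₁₂.mulVec q.2))
            + dist (Φ₂₂.mulVec p.2) (Φ₂₂.mulVec q.2) := dist_sub_sub_le' _ _ _ _ _
        _ ≤ K * (2 * K * dist p q) + K * dist p q := by
            refine add_le_add ?_ ?_
            · exact le_trans (mulVec_dist_le _ K hK0 hK21 _ _)
                (mul_le_mul_of_nonneg_left hb hK0)
            · exact le_trans (mulVec_dist_le _ K hK0 hK22 _ _)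
                (mul_le_mul_of_nonneg_left D2 hK0)
        _ ≤ 2 * K * dist p q := by
            nlinarith [mul_nonneg (by linarith : (0:ℝ) ≤ 1/2 - K)
              (mul_nonneg hK0 (dist_nonneg (x := p) (y := q)))]
    calc dist (T p) (T q) = max (dist (T p).1 (T q).1) (dist (T p).2 (T q).2) :=
          Prod.dist_eq
      _ ≤ 2 * K * dist p q := max_le hb hc
  have hC : ContractingWith (Real.toNNReal (2 * K)) T := by
    constructor
    · rw [← NNReal.coe_lt_coe, Real.coe_toNNReal _ (by linarith), NNReal.coe_one]
      linarith
    · apply LipschitzWith.of_dist_le_mul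
      intro x y
      rw [Real.coe_toNNReal _ (by linarith)]
      exact hTdist x y
  set fp := ContractingWith.fixedPoint T hC with hfpdef
  have hfp : T fp = fp := hC.fixedPoint_isFixedPt
  have h1 : g - Φ₁₁.mulVec fp.1 - Φ₁₂.mulVec fp.2 = fp.1 := congrArg Prod.fst hfp
  have h2 : gs - Φ₂₁.mulVec (g - Φ₁₁.mulVec fp.1 - Φ₁₂.mulVec fp.2) - Φ₂₂.mulVec fp.2 = fp.2 :=
    congrArg Prod.snd hfp
  rw [h1] at h2
  refine ⟨fp.1, fp.2, ⟨?_, ?_⟩, ?_, ?_⟩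
  · rw [Matrix.add_mulVec, Matrix.one_mulVec]; linear_combination -h1
  · rw [Matrix.add_mulVec, Matrix.one_mulVec]; linear_combination -h2
  · -- uniqueness
    intro b' c' hb' hc'
    have hb'' : g - Φ₁₁.mulVec b' - Φ₁₂.mulVec c' = b' := by
      rw [Matrix.add_mulVec, Matrix.one_mulVec] at hb'
      linear_combination -hb'
    have hc'' : gs - Φ₂₁.mulVec b' - Φ₂₂.mulVec c' = c' := by
      rw [Matrix.add_mulVec, Matrix.one_mulVec] at hc'
      linear_combination -hc'
    have hfix : Function.IsFixedPt T (b', c') := by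
      show T (b', c') = (b', c')
      rw [hTdef]
      simp only
      rw [hb'', hc'']
    have h := hC.fixedPoint_unique hfix
    rw [← hfpdef] at h
    exact ⟨congrArg Prod.fst h, congrArg Prod.snd h⟩
  · -- convergence
    intro bs cs hrec
    have hiter : ∀ n, (bs n, cs n) = T^[n] (bs 0, cs 0) := by
      intro n
      induction n with
      | zero => rfl
      | succ n ih =>
        rw [Function.iterate_succ_apply', ← ih, hTdef]
        simp only
        rw [← (hrec n).1, ← (hrec n).2]
    have htend : Tendsto (fun n => T^[n] (bs 0, cs 0)) atTop (nhds fp) :=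
      hC.tendsto_iterate_fixedPoint (bs 0, cs 0)
    have htend' : Tendsto (fun n => (bs n, cs n)) atTop (nhds fp) := by
      simpa only [← hiter] using htend
    exact ⟨((continuous_fst.tendsto fp).comp htend'),
      ((continuous_snd.tendsto fp).comp htend')⟩
end
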